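/- arXiv:2605.10056 — 7 statements merged into one kernel-verified Lean document; each statement's English description precedes it below -/
import Mathlib

section
/- Let q be a prime, let n, m be positive integers, and let η satisfy 0 < η < (1/4)(1 − 1/q) and m > (2/(1 − H_q(4η)))·n. If A is a uniformly random matrix in F_q^{m×n}, then the probability that there exists a nonzero vector x ∈ F_q^n with ‖Ax‖_0 ≤ 4η·m is at most q^{−n}. -/
open MeasureTheory ProbabilityTheory
open scoped ENNReal

noncomputable instance matrixMeasurableSpace (m n q : ℕ) :
    MeasurableSpace (Matrix (Fin m) (Fin n) (ZMod q)) :=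
  (inferInstance : MeasurableSpace (Fin m → Fin n → ZMod q))

/-- The `q`-ary entropy function
`H_q(ρ) = ρ·log_q(q-1) - ρ·log_q(ρ) - (1-ρ)·log_q(1-ρ)`. -/
noncomputable def qaryEntropy (q : ℕ) (ρ : ℝ) : ℝ :=
  ρ * Real.logb q (q - 1) - ρ * Real.logb q ρ - (1 - ρ) * Real.logb q (1 - ρ)

section Aux

open Finset

lemma my_qaryEntropy_div (q : ℕ) (ρ : ℝ) :
    qaryEntropy q ρ = Real.qaryEntropy q ρ / Real.log q := by
  unfold qaryEntropy Real.qaryEntropy Real.binEntropy Real.logb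
  rw [Real.log_inv, Real.log_inv]
  push_cast
  ring

lemma entropy_lt_one (q : ℕ) (hq2 : 2 ≤ q) (ρ : ℝ) (h0 : 0 ≤ ρ) (h1 : ρ < 1 - 1/(q:ℝ)) :
    qaryEntropy q ρ < 1 := by
  have hq1 : (1:ℝ) < q := by exact_mod_cast Nat.lt_of_lt_of_le one_lt_two hq2
  have hq0 : (0:ℝ) < q := by linarith
  have hqm1 : (0:ℝ) < (q:ℝ) - 1 := by linarith
  have hlogq : 0 < Real.log q := Real.log_pos hq1
  have hval : Real.qaryEntropy q (1 - 1/(q:ℝ)) = Real.log q := by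
    have h1q : 1 - 1/(q:ℝ) = ((q:ℝ)-1)/q := by field_simp
    have hlog1q : Real.log (1 - 1/(q:ℝ)) = Real.log ((q:ℝ)-1) - Real.log q := by
      rw [h1q, Real.log_div hqm1.ne' hq0.ne']
    have h2 : 1 - (1 - 1/(q:ℝ)) = 1/q := by ring
    unfold Real.qaryEntropy Real.binEntropy
    rw [Real.log_inv, Real.log_inv, h2, hlog1q, one_div, Real.log_inv]
    have : ((((q:ℕ):ℤ) - 1 : ℤ) : ℝ) = (q:ℝ) - 1 := by push_cast; ring
    rw [this]
    field_simp
    ring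
  have hmem1 : ρ ∈ Set.Icc 0 (1 - 1/(q:ℝ)) := ⟨h0, h1.le⟩
  have hmem2 : (1 - 1/(q:ℝ)) ∈ Set.Icc 0 (1 - 1/(q:ℝ)) := by
    constructor
    · have : 1/(q:ℝ) ≤ 1 := by rw [div_le_one hq0]; linarith
      linarith
    · exact le_rfl
  have hmono := Real.qaryEntropy_strictMonoOn hq2 hmem1 hmem2 h1
  rw [my_qaryEntropy_div, div_lt_one hlogq]
  calc Real.qaryEntropy q ρ < Real.qaryEntropy q (1 - 1/(q:ℝ)) := hmono
    _ = Real.log q := hval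

lemma card_nonzero (q : ℕ) [NeZero q] : Fintype.card {a : ZMod q // a ≠ 0} = q - 1 := by
  classical
  have h := Fintype.card_subtype_compl (fun a : ZMod q => a = 0)
  simp only [Fintype.card_subtype_eq, ZMod.card] at h
  exact h

/-- vectors with given support `s` are in bijection with functions `s → nonzero`. -/
def suppEquiv (q : ℕ) [NeZero q] (m : ℕ) [DecidableEq (ZMod q)] (s : Finset (Fin m)) :
    {y : Fin m → ZMod q // univ.filter (fun k => y k ≠ 0) = s}
      ≃ (s → {a : ZMod q // a ≠ 0}) where
  toFun y k := ⟨y.1 k.1, by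
    have hk : (k : Fin m) ∈ univ.filter (fun k => y.1 k ≠ 0) := by rw [y.2]; exact k.2
    simpa using hk⟩
  invFun g := ⟨fun k => if h : k ∈ s then (g ⟨k, h⟩).1 else 0, by
    ext k
    simp only [Finset.mem_filter, Finset.mem_univ, true_and]
    constructor
    · intro hk
      by_contra hks
      simp [hks] at hk
    · intro hk
      simp only [dif_pos hk]
      exact (g ⟨k, hk⟩).2⟩
  left_inv y := by
    apply Subtype.ext; funext k
    by_cases h : k ∈ s
    · simp [h]
    · have hk : k ∉ univ.filter (fun k => y.1 k ≠ 0) := by rw [y.2]; exact h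
      simp only [Finset.mem_filter, Finset.mem_univ, true_and, not_not] at hk
      simp [h, hk]
  right_inv g := by
    funext k
    apply Subtype.ext
    simp [k.2]

lemma ball_card_le_rpow (q : ℕ) (hq2 : 2 ≤ q) [NeZero q] (m : ℕ) (ρ : ℝ)
    (hρ0 : 0 < ρ) (hρ1 : ρ < 1 - 1/(q:ℝ)) :
    (Nat.card {y : Fin m → ZMod q // (hammingNorm y : ℝ) ≤ ρ * m} : ℝ)
      ≤ (q:ℝ) ^ (qaryEntropy q ρ * m) := by
  classical
  have hq1 : (1:ℝ) < q := by exact_mod_cast Nat.lt_of_lt_of_le one_lt_two hq2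
  have hq0 : (0:ℝ) < q := by linarith
  have hqm1 : (0:ℝ) < (q:ℝ) - 1 := by linarith
  have hqinv : 0 < 1/(q:ℝ) := by positivity
  have hρlt1 : ρ < 1 := by linarith
  have h1ρ : 0 < 1 - ρ := by linarith
  set L : ℝ := (ρ/((q:ℝ)-1)) ^ (ρ*m) * (1-ρ) ^ ((1-ρ)*m) with hLdef
  have hL0 : 0 < L :=
    mul_pos (Real.rpow_pos_of_pos (by positivity) _) (Real.rpow_pos_of_pos h1ρ _)
  clear_value L
  have hpowlogb : ∀ (x a : ℝ), 0 < x → (q:ℝ) ^ (a * Real.logb q x) = x ^ a := by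
    intro x a hx
    rw [mul_comm, Real.rpow_mul hq0.le, Real.rpow_logb hq0 (by linarith) hx]
  have hqH : (q:ℝ) ^ (qaryEntropy q ρ * m) = L⁻¹ := by
    have hexp : qaryEntropy q ρ * m
        = (ρ*m) * Real.logb q ((q:ℝ)-1) - (ρ*m) * Real.logb q ρ
          - ((1-ρ)*m) * Real.logb q (1-ρ) := by
      unfold qaryEntropy; push_cast; ring
    rw [hexp, Real.rpow_sub hq0, Real.rpow_sub hq0, hpowlogb _ _ hqm1, hpowlogb _ _ hρ0,
      hpowlogb _ _ h1ρ, hLdef, Real.div_rpow hρ0.le hqm1.le]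
    have h1 : ((q:ℝ)-1) ^ (ρ*m) ≠ 0 := (Real.rpow_pos_of_pos hqm1 _).ne'
    have h2 : ρ ^ (ρ*m) ≠ 0 := (Real.rpow_pos_of_pos hρ0 _).ne'
    have h3 : (1-ρ) ^ ((1-ρ)*m) ≠ 0 := (Real.rpow_pos_of_pos h1ρ _).ne'
    field_simp
  -- the base ratio r
  set r : ℝ := ρ/(((q:ℝ)-1)*(1-ρ)) with hrdef
  have hr0 : 0 < r := by rw [hrdef]; positivity
  clear_value r
  have hρq : ρ * q < (q:ℝ) - 1 := by
    have := mul_lt_mul_of_pos_right hρ1 hq0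
    have hq' : (1 - 1/(q:ℝ)) * q = (q:ℝ) - 1 := by field_simp
    linarith [hq' ▸ this]
  have hr1 : r ≤ 1 := by
    rw [hrdef, div_le_one (by positivity)]
    nlinarith
  have hsplit : ρ/((q:ℝ)-1) = r * (1-ρ) := by
    rw [hrdef]; field_simp
  have hLr : L = r ^ (ρ*m) * (1-ρ) ^ (m:ℝ) := by
    have h1 : (r * (1-ρ)) ^ (ρ*(m:ℝ)) = r ^ (ρ*(m:ℝ)) * (1-ρ) ^ (ρ*(m:ℝ)) :=
      Real.mul_rpow hr0.le h1ρ.le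
    have h2 : (1-ρ) ^ (ρ*(m:ℝ)) * (1-ρ) ^ ((1-ρ)*(m:ℝ)) = (1-ρ) ^ (ρ*(m:ℝ) + (1-ρ)*(m:ℝ)) :=
      (Real.rpow_add h1ρ _ _).symm
    have h3 : ρ*(m:ℝ) + (1-ρ)*(m:ℝ) = (m:ℝ) := by ring
    rw [hLdef, hsplit, h1, mul_assoc, h2, h3]
  -- per-term bound
  have hterm : ∀ s : Finset (Fin m), (s.card : ℝ) ≤ ρ*m →
      ((q:ℝ)-1) ^ s.card * L ≤ ρ ^ s.card * (1-ρ) ^ (m - s.card) := by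
    intro s hs
    have him : s.card ≤ m := by
      simpa using Finset.card_le_univ s
    have h1 : L ≤ r ^ s.card * (1-ρ) ^ m := by
      rw [hLr, ← Real.rpow_natCast r s.card, ← Real.rpow_natCast (1-ρ) m]
      exact mul_le_mul_of_nonneg_right
        (Real.rpow_le_rpow_of_exponent_ge hr0 hr1 hs)
        (Real.rpow_pos_of_pos h1ρ _).le
    calc ((q:ℝ)-1) ^ s.card * L ≤ ((q:ℝ)-1) ^ s.card * (r ^ s.card * (1-ρ) ^ m) := by
          exact mul_le_mul_of_nonneg_left h1 (by positivity)
      _ = (((q:ℝ)-1) * (r * (1-ρ))) ^ s.card * (1-ρ) ^ (m - s.card) := by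
          rw [mul_pow, mul_pow, ← pow_mul_pow_sub (1-ρ) him]
          ring
      _ = ρ ^ s.card * (1-ρ) ^ (m - s.card) := by
          rw [← hsplit, mul_div_cancel₀ _ hqm1.ne']
  -- count the ball by supports
  set T : Finset (Finset (Fin m)) :=
    univ.powerset.filter (fun s : Finset (Fin m) => (s.card:ℝ) ≤ ρ*m) with hT
  have hsuppcard : ∀ y : Fin m → ZMod q,
      (univ.filter (fun k => y k ≠ 0)).card = hammingNorm y := fun _ => rfl
  have hcard : Nat.card {y : Fin m → ZMod q // (hammingNorm y : ℝ) ≤ ρ * m}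
      = ∑ s ∈ T, (q-1)^s.card := by
    rw [Nat.card_eq_fintype_card, Fintype.card_subtype]
    rw [Finset.card_eq_sum_card_fiberwise
      (f := fun y : Fin m → ZMod q => univ.filter (fun k => y k ≠ 0)) (t := T) ?_]
    · refine Finset.sum_congr rfl (fun s hs => ?_)
      have hfib : (univ.filter (fun y : Fin m → ZMod q => (hammingNorm y : ℝ) ≤ ρ*m)).filter
            (fun y => univ.filter (fun k => y k ≠ 0) = s)
          = univ.filter (fun y : Fin m → ZMod q => univ.filter (fun k => y k ≠ 0) = s) := by
        rw [Finset.filter_filter]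
        apply Finset.filter_congr
        intro y _
        simp only [and_iff_right_iff_imp]
        intro hy
        rw [← hsuppcard y, hy]
        exact (Finset.mem_filter.1 hs).2
      rw [hfib, ← Fintype.card_subtype, Fintype.card_congr (suppEquiv q m s)]
      rw [Fintype.card_fun, card_nonzero, Fintype.card_coe]
    · intro y hy
      simp only [Finset.coe_filter, Set.mem_setOf_eq, Finset.mem_filter, Finset.mem_univ, true_and] at hy ⊢
      rw [hT]
      simp only [Finset.mem_coe, Finset.mem_filter, Finset.mem_powerset]
      exact ⟨Finset.subset_univ _, by rw [hsuppcard y]; exact hy⟩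
  -- sum bound
  have hq1n : (1:ℕ) ≤ q := le_trans one_le_two hq2
  have hcast : ((q-1 : ℕ) : ℝ) = (q:ℝ) - 1 := by
    push_cast [Nat.cast_sub hq1n]; ring
  have hsum : (Nat.card {y : Fin m → ZMod q // (hammingNorm y : ℝ) ≤ ρ * m} : ℝ) * L ≤ 1 := by
    rw [hcard]
    push_cast [hcast]
    rw [Finset.sum_mul]
    calc ∑ s ∈ T, ((q:ℝ)-1)^s.card * L
        ≤ ∑ s ∈ T, ρ ^ s.card * (1-ρ) ^ (m - s.card) := by
          refine Finset.sum_le_sum (fun s hs => ?_)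
          refine hterm s ?_
          rw [hT] at hs
          exact (Finset.mem_filter.1 hs).2
      _ ≤ ∑ s ∈ (univ : Finset (Fin m)).powerset, ρ ^ s.card * (1-ρ) ^ (m - s.card) := by
          refine Finset.sum_le_sum_of_subset_of_nonneg (Finset.filter_subset _ _) ?_
          intro s _ _
          positivity
      _ = 1 := by
          have hb := Finset.prod_add (fun _ : Fin m => ρ) (fun _ : Fin m => 1-ρ)
            (univ : Finset (Fin m))
          simp only [Finset.prod_const, Finset.card_univ_diff, Fintype.card_fin,
            Finset.card_univ] at hb
          have h11 : ρ + (1-ρ) = 1 := by ring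
          rw [h11, one_pow] at hb
          exact hb.symm
  rw [hqH]
  rw [← one_div, le_div_iff₀ hL0]
  exact hsum

/-- splitting a row by the dot product with `x`. -/
def rowFun (q : ℕ) (n : ℕ) (x : Fin n → ZMod q) (j : Fin n) :
    (Fin n → ZMod q) → (ZMod q × ({i : Fin n // i ≠ j} → ZMod q)) :=
  fun a => (∑ i, a i * x i, fun i => a i.1)

lemma rowFun_bijective (q : ℕ) (hq : q.Prime) [NeZero q] (n : ℕ) (x : Fin n → ZMod q)
    (j : Fin n) (hj : x j ≠ 0) : Function.Bijective (rowFun q n x j) := by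
  classical
  haveI := Fact.mk hq
  have hsplit : ∀ a : Fin n → ZMod q,
      ∑ i, a i * x i = a j * x j + ∑ i' : {i : Fin n // i ≠ j}, a i'.1 * x i'.1 := by
    intro a
    rw [← Finset.add_sum_erase _ _ (Finset.mem_univ j)]
    congr 1
    exact Finset.sum_subtype (p := fun i => i ≠ j) (Finset.univ.erase j)
      (fun i => by simp) (fun i => a i * x i)
  rw [Fintype.bijective_iff_injective_and_card]
  constructor
  · intro a b hab
    have h2 : ∀ i : {i : Fin n // i ≠ j}, a i.1 = b i.1 :=
      fun i => congrFun (congrArg Prod.snd hab) i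
    have h1 : ∑ i, a i * x i = ∑ i, b i * x i := congrArg Prod.fst hab
    rw [hsplit a, hsplit b] at h1
    have hS : ∑ i' : {i : Fin n // i ≠ j}, a i'.1 * x i'.1
        = ∑ i' : {i : Fin n // i ≠ j}, b i'.1 * x i'.1 :=
      Finset.sum_congr rfl (fun i _ => by rw [h2 i])
    rw [hS] at h1
    have haj : a j = b j := mul_right_cancel₀ hj (add_right_cancel h1)
    funext i
    by_cases h : i = j
    · subst h; exact haj
    · exact h2 ⟨i, h⟩
  · have hn1 : Fintype.card {i : Fin n // i ≠ j} = n - 1 := by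
      have h := Fintype.card_subtype_compl (fun i : Fin n => i = j)
      simpa [Fintype.card_subtype_eq] using h
    have hn0 : 0 < n := j.pos
    rw [Fintype.card_prod, Fintype.card_fun, Fintype.card_fun, hn1, ZMod.card,
      Fintype.card_fin, ← pow_succ']
    congr 1
    omega

lemma fiber_card (q : ℕ) (hq : q.Prime) [NeZero q] (m n : ℕ)
    (x : Fin n → ZMod q) (hx : x ≠ 0) (P : (Fin m → ZMod q) → Prop) :
    Nat.card {A : Matrix (Fin m) (Fin n) (ZMod q) // P (A.mulVec x)}
      = Nat.card {y : Fin m → ZMod q // P y} * q ^ (m * (n-1)) := by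
  classical
  obtain ⟨j, hj⟩ : ∃ j, x j ≠ 0 := by
    by_contra h; push_neg at h; exact hx (funext h)
  let e0 : (Fin n → ZMod q) ≃ (ZMod q × ({i : Fin n // i ≠ j} → ZMod q)) :=
    Equiv.ofBijective _ (rowFun_bijective q hq n x j hj)
  have he0 : ∀ a : Fin n → ZMod q, (e0 a).1 = ∑ i, a i * x i := fun _ => rfl
  let E : Matrix (Fin m) (Fin n) (ZMod q)
      ≃ ((Fin m → ZMod q) × (Fin m → {i : Fin n // i ≠ j} → ZMod q)) :=
  { toFun := fun A => (fun r => (e0 (A r)).1, fun r => (e0 (A r)).2)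
    invFun := fun p r => e0.symm (p.1 r, p.2 r)
    left_inv := fun A => by
      funext r
      simp
    right_inv := fun p => by
      have h : ∀ r, e0 (e0.symm (p.1 r, p.2 r)) = (p.1 r, p.2 r) :=
        fun r => e0.apply_symm_apply _
      refine Prod.ext ?_ ?_ <;> · funext r; simp }
  have hkey : ∀ A : Matrix (Fin m) (Fin n) (ZMod q), A.mulVec x = (E A).1 := by
    intro A
    funext r
    rfl
  have e2 : {A : Matrix (Fin m) (Fin n) (ZMod q) // P (A.mulVec x)}
      ≃ ({y : Fin m → ZMod q // P y} × (Fin m → {i : Fin n // i ≠ j} → ZMod q)) :=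
    (E.subtypeEquiv (q := fun z => P z.1) (fun A => by rw [hkey A])).trans
      { toFun := fun p => (⟨p.1.1, p.2⟩, p.1.2)
        invFun := fun z => ⟨(z.1.1, z.2), z.1.2⟩
        left_inv := fun p => rfl
        right_inv := fun z => rfl }
  rw [Nat.card_congr e2, Nat.card_prod]
  congr 1
  have hsub : Fintype.card {i : Fin n // i ≠ j} = n - 1 := by
    have h := Fintype.card_subtype_compl (fun i : Fin n => i = j)
    simpa [Fintype.card_subtype_eq] using h
  rw [Nat.card_eq_fintype_card, Fintype.card_fun, Fintype.card_fun, hsub, ZMod.card,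
    Fintype.card_fin, ← pow_mul, Nat.mul_comm]

/-- measure of a set under a uniform-type measure. -/
lemma unif_measure {α : Type*} [Fintype α] [MeasurableSpace α] [MeasurableSingletonClass α]
    (μ : Measure α) (c : ℝ≥0∞) (hμ : ∀ a, μ {a} = c) (S : Set α) :
    μ S = (Nat.card S : ℝ≥0∞) * c := by
  classical
  have hS : S = ⋃ a ∈ S.toFinset, ({a} : Set α) := by
    ext a; simp
  have h1 : μ S = ∑ a ∈ S.toFinset, μ {a} := by
    conv_lhs => rw [hS]
    refine measure_biUnion_finset ?_ (fun a _ => measurableSet_singleton a)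
    intro a _ b _ hab
    simp [Set.disjoint_singleton, hab]
  rw [h1, Finset.sum_congr rfl (fun a _ => hμ a), Finset.sum_const, nsmul_eq_mul,
    Nat.card_eq_card_toFinset]

end Aux

/-- **Gilbert–Varshamov-type bound for random codes.**
Let `q` be prime, `0 < η < (1/4)(1 - 1/q)` and `m > (2/(1 - H_q(4η)))·n`.  If `A` is a
uniformly random matrix in `F_q^{m×n}`, then the probability that some nonzero `x ∈ F_q^n`
has `‖Ax‖₀ ≤ 4ηm` is at most `q^{-n}`. -/
theorem gv_bound_random_code
    (q n m : ℕ) (hq : q.Prime) [NeZero q] (hn : 0 < n) (hm : 0 < m)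
    (η : ℝ) (hη0 : 0 < η) (hη1 : η < (1 / 4) * (1 - 1 / q))
    (hmn : (2 / (1 - qaryEntropy q (4 * η))) * n < (m : ℝ))
    (μ : Measure (Matrix (Fin m) (Fin n) (ZMod q))) [IsProbabilityMeasure μ]
    (hμ : ∀ A : Matrix (Fin m) (Fin n) (ZMod q),
      μ {A} = (Fintype.card (Matrix (Fin m) (Fin n) (ZMod q)) : ℝ≥0∞)⁻¹) :
    μ {A | ∃ x : Fin n → ZMod q, x ≠ 0 ∧
        (hammingNorm (A.mulVec x) : ℝ) ≤ 4 * η * m} ≤ ((q : ℝ≥0∞) ^ n)⁻¹ := by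
  classical
  have hq2 : 2 ≤ q := hq.two_le
  have hq1R : (1:ℝ) < q := by exact_mod_cast Nat.lt_of_lt_of_le one_lt_two hq2
  have hq0R : (0:ℝ) < q := by linarith
  set ρ : ℝ := 4 * η with hρdef
  have hρ0 : 0 < ρ := by positivity
  have hρ1 : ρ < 1 - 1/(q:ℝ) := by rw [hρdef]; linarith
  have hH1 : qaryEntropy q ρ < 1 := entropy_lt_one q hq2 ρ hρ0.le hρ1
  have h1H : 0 < 1 - qaryEntropy q ρ := by linarith
  -- exponent inequality
  have hexp : qaryEntropy q ρ * m + 2*n ≤ (m:ℝ) := by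
    rw [div_mul_eq_mul_div, div_lt_iff₀ h1H] at hmn
    nlinarith
  -- ball bound
  set B : ℕ := Nat.card {y : Fin m → ZMod q // (hammingNorm y : ℝ) ≤ ρ*m} with hBdef
  have hBR : (B:ℝ) ≤ (q:ℝ) ^ (qaryEntropy q ρ * m) :=
    ball_card_le_rpow q hq2 m ρ hρ0 hρ1
  -- key nat inequality : B * q^(2n) ≤ q^m
  have hkeyR : (B:ℝ) * (q:ℝ)^(2*n : ℕ) ≤ (q:ℝ)^(m : ℕ) := by
    have h1 : ((q:ℝ))^(2*n : ℕ) = (q:ℝ) ^ ((2*n : ℕ) : ℝ) := by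
      rw [Real.rpow_natCast]
    have h2 : ((q:ℝ))^(m : ℕ) = (q:ℝ) ^ ((m : ℕ) : ℝ) := by
      rw [Real.rpow_natCast]
    rw [h1, h2]
    calc (B:ℝ) * (q:ℝ) ^ ((2*n : ℕ) : ℝ)
        ≤ (q:ℝ) ^ (qaryEntropy q ρ * m) * (q:ℝ) ^ ((2*n : ℕ) : ℝ) := by
          exact mul_le_mul_of_nonneg_right hBR (Real.rpow_pos_of_pos hq0R _).le
      _ = (q:ℝ) ^ (qaryEntropy q ρ * m + ((2*n : ℕ) : ℝ)) := by
          rw [← Real.rpow_add hq0R]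
      _ ≤ (q:ℝ) ^ ((m : ℕ) : ℝ) := by
          apply Real.rpow_le_rpow_of_exponent_le hq1R.le
          push_cast
          linarith
  have hkeyN : B * q^(2*n) ≤ q^m := by
    have := hkeyR
    exact_mod_cast this
  -- decompose the bad set
  set P : (Fin m → ZMod q) → Prop := fun y => (hammingNorm y : ℝ) ≤ ρ*m with hPdef
  have hbad : {A : Matrix (Fin m) (Fin n) (ZMod q) | ∃ x : Fin n → ZMod q, x ≠ 0 ∧
        (hammingNorm (A.mulVec x) : ℝ) ≤ ρ * m}
      = ⋃ x ∈ Finset.univ.erase (0 : Fin n → ZMod q),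
          {A : Matrix (Fin m) (Fin n) (ZMod q) | P (A.mulVec x)} := by
    ext A
    simp [hPdef, Finset.mem_erase, and_comm, mul_assoc]
  have hμ' : μ {A : Matrix (Fin m) (Fin n) (ZMod q) | ∃ x : Fin n → ZMod q, x ≠ 0 ∧
        (hammingNorm (A.mulVec x) : ℝ) ≤ ρ * m}
      ≤ ∑ x ∈ Finset.univ.erase (0 : Fin n → ZMod q),
          μ {A : Matrix (Fin m) (Fin n) (ZMod q) | P (A.mulVec x)} := by
    rw [hbad]
    exact measure_biUnion_finset_le _ _
  have hcardM : Fintype.card (Matrix (Fin m) (Fin n) (ZMod q)) = q ^ (m * n) := by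
    have : Fintype.card (Matrix (Fin m) (Fin n) (ZMod q))
        = Fintype.card (Fin m → Fin n → ZMod q) := rfl
    rw [this, Fintype.card_fun, Fintype.card_fun, ZMod.card, Fintype.card_fin,
      Fintype.card_fin, ← pow_mul, Nat.mul_comm]
  haveI : MeasurableSingletonClass (Matrix (Fin m) (Fin n) (ZMod q)) :=
    (inferInstance : MeasurableSingletonClass (Fin m → Fin n → ZMod q))
  have hμx : ∀ x : Fin n → ZMod q, x ≠ 0 →
      μ {A : Matrix (Fin m) (Fin n) (ZMod q) | P (A.mulVec x)}
        = ((B * q^(m*(n-1)) : ℕ) : ℝ≥0∞) * ((q ^ (m*n) : ℕ) : ℝ≥0∞)⁻¹ := by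
    intro x hx
    rw [unif_measure μ _ hμ]
    rw [hcardM]
    congr 2
    have : Nat.card ↥{A : Matrix (Fin m) (Fin n) (ZMod q) | P (A.mulVec x)}
        = Nat.card {A : Matrix (Fin m) (Fin n) (ZMod q) // P (A.mulVec x)} := rfl
    rw [this, fiber_card q hq m n x hx P, hBdef]
  -- final computation
  have hcard_erase : (Finset.univ.erase (0 : Fin n → ZMod q)).card = q^n - 1 := by
    rw [Finset.card_erase_of_mem (Finset.mem_univ _), Finset.card_univ, Fintype.card_fun,
      ZMod.card, Fintype.card_fin]
  have hsum : ∑ x ∈ Finset.univ.erase (0 : Fin n → ZMod q),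
        μ {A : Matrix (Fin m) (Fin n) (ZMod q) | P (A.mulVec x)}
      = ((q^n - 1 : ℕ) : ℝ≥0∞) * (((B * q^(m*(n-1)) : ℕ) : ℝ≥0∞) * ((q ^ (m*n) : ℕ) : ℝ≥0∞)⁻¹) := by
    rw [Finset.sum_congr rfl (fun x hx => hμx x (Finset.mem_erase.1 hx).1)]
    rw [Finset.sum_const, hcard_erase, nsmul_eq_mul]
  -- nat inequality for the final bound
  have hfinalN : (q^n - 1) * (B * q^(m*(n-1))) * q^n ≤ q^(m*n) := by
    have h1 : (q^n - 1) * (B * q^(m*(n-1))) * q^n ≤ q^n * (B * q^(m*(n-1))) * q^n := by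
      apply Nat.mul_le_mul_right
      apply Nat.mul_le_mul_right
      exact Nat.sub_le _ _
    refine le_trans h1 ?_
    have h2 : q^n * (B * q^(m*(n-1))) * q^n = (B * q^(2*n)) * q^(m*(n-1)) := by ring
    rw [h2]
    calc (B * q^(2*n)) * q^(m*(n-1)) ≤ q^m * q^(m*(n-1)) :=
          Nat.mul_le_mul_right _ hkeyN
      _ = q^(m*n) := by
          rw [← pow_add]
          congr 1
          have : n - 1 + 1 = n := Nat.succ_pred_eq_of_pos hn
          calc m + m * (n-1) = m * ((n-1) + 1) := by ring
            _ = m * n := by rw [this]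
  -- conclude in ℝ≥0∞
  have hne0 : ((q ^ (m*n) : ℕ) : ℝ≥0∞) ≠ 0 :=
    Nat.cast_ne_zero.mpr (pow_ne_zero _ hq.ne_zero)
  have hgoal : ((q^n - 1 : ℕ) : ℝ≥0∞) * (((B * q^(m*(n-1)) : ℕ) : ℝ≥0∞) * ((q ^ (m*n) : ℕ) : ℝ≥0∞)⁻¹)
      ≤ ((q : ℝ≥0∞) ^ n)⁻¹ := by
    have hqn : ((q : ℝ≥0∞) ^ n) = ((q^n : ℕ) : ℝ≥0∞) := by push_cast; rfl
    rw [hqn, ENNReal.le_inv_iff_mul_le]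
    have hle : ((q^n - 1 : ℕ) : ℝ≥0∞) * ((B * q^(m*(n-1)) : ℕ) : ℝ≥0∞) * ((q^n : ℕ) : ℝ≥0∞)
        ≤ ((q ^ (m*n) : ℕ) : ℝ≥0∞) := by
      rw [← Nat.cast_mul, ← Nat.cast_mul]
      exact_mod_cast hfinalN
    calc ((q^n - 1 : ℕ) : ℝ≥0∞) * (((B * q^(m*(n-1)) : ℕ) : ℝ≥0∞) * ((q ^ (m*n) : ℕ) : ℝ≥0∞)⁻¹)
          * ((q^n : ℕ) : ℝ≥0∞)
        = (((q^n-1:ℕ):ℝ≥0∞) * ((B * q^(m*(n-1)) : ℕ) : ℝ≥0∞) * ((q^n : ℕ) : ℝ≥0∞))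
          * ((q ^ (m*n) : ℕ) : ℝ≥0∞)⁻¹ := by ring
      _ ≤ ((q ^ (m*n) : ℕ) : ℝ≥0∞) * ((q ^ (m*n) : ℕ) : ℝ≥0∞)⁻¹ := mul_le_mul_left hle _
      _ = 1 := ENNReal.mul_inv_cancel hne0 (ENNReal.natCast_ne_top _)
  exact hμ'.trans (le_of_eq_of_le hsum hgoal)
end

section
/- Let q be a prime, let n, m be positive integers, and let η satisfy 0 < η < (1/4)(1 − 1/q) and m > (2/(1 − H_q(4η)))·n. Sample A uniformly from F_q^{m×n}, s uniformly from F_q^n, and e from (Ber_q(η))^m, all independently, and set b = A·s + e. Then with probability at least 1 − q^{−n} − exp(−ηm/3), the secret s is the unique vector v ∈ F_q^n satisfying ‖b − A·v‖_0 ≤ 2η·m. -/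
open MeasureTheory ProbabilityTheory
open scoped ENNReal

section LPNAux

open Finset

/-- Sum over all functions of a product of per-coordinate values. -/
lemma LPN.sum_pi_prod {q m : ℕ} [NeZero q] (f : ZMod q → ℝ) :
    ∑ e : Fin m → ZMod q, ∏ i, f (e i) = (∑ x, f x) ^ m := by
  rw [← Fin.prod_const m (∑ x : ZMod q, f x), Finset.prod_univ_sum, Fintype.piFinset_univ]

lemma LPN.sum_zmod_ite {q : ℕ} [NeZero q] (hq : 1 ≤ q) (a b : ℝ) :
    ∑ x : ZMod q, (if x = 0 then a else b) = a + ((q : ℝ) - 1) * b := by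
  rw [← Finset.add_sum_erase _ _ (Finset.mem_univ (0 : ZMod q))]
  simp only [if_pos rfl]
  congr 1
  rw [Finset.sum_congr rfl (fun x hx => if_neg (Finset.ne_of_mem_erase hx)),
    Finset.sum_const, Finset.card_erase_of_mem (Finset.mem_univ _)]
  simp [ZMod.card, Nat.cast_sub hq, nsmul_eq_mul]

lemma LPN.prod_ite_weight {q m : ℕ} [NeZero q] (e : Fin m → ZMod q) (a b : ℝ) :
    ∏ i, (if e i = 0 then a else b) = b ^ (hammingNorm e) * a ^ (m - hammingNorm e) := by
  rw [Finset.prod_ite (f := fun _ => a) (g := fun _ => b), Finset.prod_const, Finset.prod_const]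
  have h1 : (Finset.univ.filter (fun i => ¬ e i = 0)).card = hammingNorm e := by
    simp [hammingNorm, Ne]
  have h2 : (Finset.univ.filter (fun i => e i = 0)).card = m - hammingNorm e := by
    have := Finset.card_filter_add_card_filter_not (s := (univ : Finset (Fin m)))
      (p := fun i => e i = 0)
    simp only [Finset.card_univ, Fintype.card_fin] at this
    omega
  rw [h1, h2, mul_comm]

lemma LPN.hammingNorm_le' {q m : ℕ} [NeZero q] (e : Fin m → ZMod q) : hammingNorm e ≤ m := by
  simpa using hammingNorm_le_card_fintype (x := e)

lemma LPN.pow_eq_exp (a : ℝ) (ha : 0 < a) (k : ℕ) :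
    a ^ k = Real.exp ((k:ℝ) * Real.log a) := by
  rw [Real.exp_nat_mul, Real.exp_log ha]

/-- Chernoff-type bound for the tail of the Bernoulli noise weight. -/
lemma LPN.chernoff_real (q m : ℕ) [NeZero q] (hq : 1 ≤ q) {η : ℝ} (hη0 : 0 < η)
    (hη1 : η < 1/4) :
    ∑ e ∈ Finset.univ.filter (fun e : Fin m → ZMod q => (2*η*m : ℝ) < (hammingNorm e : ℝ)),
      ∏ i, (if e i = 0 then (1 - η) + η/(q:ℝ) else η/(q:ℝ)) ≤ Real.exp (-(η*m)/3) := by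
  have hqR : (1:ℝ) ≤ q := by exact_mod_cast hq
  have hp0 : (0:ℝ) ≤ (1 - η) + η/(q:ℝ) := by
    have : η/(q:ℝ) ≥ 0 := by positivity
    nlinarith
  have hp1 : (0:ℝ) ≤ η/(q:ℝ) := by positivity
  set K : ℝ := Real.exp (-(2*η*m)*Real.log 2) with hK
  have step1 : ∀ e ∈ Finset.univ.filter
      (fun e : Fin m → ZMod q => (2*η*m : ℝ) < (hammingNorm e : ℝ)),
      ∏ i, (if e i = 0 then (1 - η) + η/(q:ℝ) else η/(q:ℝ))
        ≤ K * ∏ i, (if e i = 0 then (1 - η) + η/(q:ℝ) else 2*(η/(q:ℝ))) := by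
    intro e he
    rw [Finset.mem_filter] at he
    have hw : (2*η*m : ℝ) < (hammingNorm e : ℝ) := he.2
    rw [LPN.prod_ite_weight, LPN.prod_ite_weight, mul_pow]
    have h2w : Real.exp ((2*η*m)*Real.log 2) ≤ (2:ℝ) ^ (hammingNorm e) := by
      calc Real.exp ((2*η*m)*Real.log 2) ≤ Real.exp ((hammingNorm e : ℝ)*Real.log 2) := by
            apply Real.exp_le_exp.2
            exact mul_le_mul_of_nonneg_right hw.le (Real.log_nonneg (by norm_num))
        _ = (2:ℝ) ^ (hammingNorm e) := by
            rw [← Real.exp_log (by positivity : (0:ℝ) < (2:ℝ)^(hammingNorm e)),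
              Real.log_pow]
    have h1 : (1:ℝ) ≤ K * (2:ℝ)^(hammingNorm e) := by
      rw [hK, ← Real.exp_log (by positivity : (0:ℝ) < (2:ℝ)^(hammingNorm e)), ← Real.exp_add]
      rw [← Real.exp_zero]
      apply Real.exp_le_exp.2
      have := Real.exp_le_exp.1 (h2w.trans_eq (Real.exp_log (by positivity)).symm)
      linarith
    calc ((η/(q:ℝ)) ^ hammingNorm e * ((1 - η) + η/(q:ℝ)) ^ (m - hammingNorm e))
        ≤ (K * (2:ℝ)^(hammingNorm e)) *
            ((η/(q:ℝ)) ^ hammingNorm e * ((1 - η) + η/(q:ℝ)) ^ (m - hammingNorm e)) := by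
          apply le_mul_of_one_le_left (by positivity) h1
      _ = K * ((2:ℝ)^(hammingNorm e) * (η/(q:ℝ)) ^ hammingNorm e *
            ((1 - η) + η/(q:ℝ)) ^ (m - hammingNorm e)) := by ring
  calc ∑ e ∈ Finset.univ.filter (fun e : Fin m → ZMod q => (2*η*m : ℝ) < (hammingNorm e : ℝ)),
        ∏ i, (if e i = 0 then (1 - η) + η/(q:ℝ) else η/(q:ℝ))
      ≤ ∑ e ∈ Finset.univ.filter (fun e : Fin m → ZMod q => (2*η*m : ℝ) < (hammingNorm e : ℝ)),
        K * ∏ i, (if e i = 0 then (1 - η) + η/(q:ℝ) else 2*(η/(q:ℝ))) := Finset.sum_le_sum step1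
    _ ≤ ∑ e : Fin m → ZMod q, K * ∏ i, (if e i = 0 then (1 - η) + η/(q:ℝ) else 2*(η/(q:ℝ))) := by
        apply Finset.sum_le_sum_of_subset_of_nonneg (Finset.filter_subset _ _)
        intro e _ _
        apply mul_nonneg (Real.exp_nonneg _)
        apply Finset.prod_nonneg; intro i _; split
        · exact hp0
        · positivity
    _ = K * ((1 - η + η/(q:ℝ)) + ((q:ℝ)-1) * (2*(η/(q:ℝ)))) ^ m := by
        rw [← Finset.mul_sum,
          LPN.sum_pi_prod (fun x => if x = 0 then (1 - η) + η/(q:ℝ) else 2*(η/(q:ℝ))),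
          LPN.sum_zmod_ite hq]
    _ ≤ Real.exp (-(η*m)/3) := by
        have hqpos : (0:ℝ) < q := by linarith
        have hbase : (1 - η + η/(q:ℝ)) + ((q:ℝ)-1) * (2*(η/(q:ℝ))) = 1 + η*(1 - 1/(q:ℝ)) := by
          field_simp; ring
        rw [hbase]
        have hb0 : (0:ℝ) ≤ 1 + η*(1 - 1/(q:ℝ)) := by
          have h1q : 1/(q:ℝ) ≤ 1 := by rw [div_le_one hqpos]; exact hqR
          nlinarith
        have hble : 1 + η*(1 - 1/(q:ℝ)) ≤ Real.exp η := by
          have h1q : 0 < 1/(q:ℝ) := by positivity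
          nlinarith [Real.add_one_le_exp η]
        have hpow : (1 + η*(1 - 1/(q:ℝ)))^m ≤ Real.exp (η*m) := by
          calc (1 + η*(1 - 1/(q:ℝ)))^m ≤ (Real.exp η)^m := pow_le_pow_left₀ hb0 hble m
            _ = Real.exp (η*m) := by rw [← Real.exp_nat_mul]; ring_nf
        calc K * (1 + η*(1 - 1/(q:ℝ)))^m ≤ K * Real.exp (η*m) := by
              apply mul_le_mul_of_nonneg_left hpow (Real.exp_nonneg _)
          _ = Real.exp (η*m - 2*η*m*Real.log 2) := by rw [hK, ← Real.exp_add]; ring_nf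
          _ ≤ Real.exp (-(η*m)/3) := by
              apply Real.exp_le_exp.2
              have hlog : (0.6931471803:ℝ) < Real.log 2 := Real.log_two_gt_d9
              have hηm : (0:ℝ) ≤ η*m := by positivity
              nlinarith

/-- Entropy bound on the size of a Hamming ball. -/
lemma LPN.ball_card_le (q m : ℕ) [NeZero q] (hq : 2 ≤ q) {ρ : ℝ} (hρ0 : 0 < ρ)
    (hρq : ρ < 1 - 1/(q:ℝ)) :
    ((Finset.univ.filter (fun y : Fin m → ZMod q => (hammingNorm y : ℝ) ≤ ρ * m)).card : ℝ)
      ≤ Real.exp ((m:ℝ) * (ρ * Real.log ((q:ℝ)-1) - ρ * Real.log ρ - (1-ρ) * Real.log (1-ρ))) := by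
  have hqR : (2:ℝ) ≤ q := by exact_mod_cast hq
  have hq1 : (0:ℝ) < (q:ℝ) - 1 := by linarith
  have hqpos : (0:ℝ) < q := by linarith
  have hρ1 : ρ < 1 := by
    have : 0 < 1/(q:ℝ) := by positivity
    linarith
  have h1ρ : (0:ℝ) < 1 - ρ := by linarith
  set L : ℝ := Real.log ρ - Real.log ((q:ℝ)-1) - Real.log (1-ρ) with hL
  have hLnonpos : L ≤ 0 := by
    have key : ρ * (q:ℝ) < (q:ℝ) - 1 := by
      have h := mul_lt_mul_of_pos_right hρq hqpos
      have h2 : (1 - 1/(q:ℝ)) * q = q - 1 := by field_simp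
      linarith [h.trans_eq h2]
    have hle : ρ ≤ ((q:ℝ)-1) * (1-ρ) := by nlinarith
    have := Real.log_le_log hρ0 hle
    rw [Real.log_mul (ne_of_gt hq1) (ne_of_gt h1ρ)] at this
    simp only [hL]; linarith
  have hweight : ∀ y : Fin m → ZMod q,
      ∏ i, (if y i = 0 then (1-ρ) else ρ/((q:ℝ)-1))
        = Real.exp ((m:ℝ) * Real.log (1-ρ) + (hammingNorm y : ℝ) * L) := by
    intro y
    have hw := LPN.hammingNorm_le' y
    rw [LPN.prod_ite_weight, LPN.pow_eq_exp _ (by positivity), LPN.pow_eq_exp _ h1ρ,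
      ← Real.exp_add]
    congr 1
    rw [Real.log_div (ne_of_gt hρ0) (ne_of_gt hq1), Nat.cast_sub hw]
    simp only [hL]; ring
  have hwnn : ∀ y : Fin m → ZMod q,
      (0:ℝ) ≤ ∏ i, (if y i = 0 then (1-ρ) else ρ/((q:ℝ)-1)) := by
    intro y; apply Finset.prod_nonneg; intro i _; split
    · linarith
    · positivity
  have hsum : ∑ y : Fin m → ZMod q, ∏ i, (if y i = 0 then (1-ρ) else ρ/((q:ℝ)-1)) = 1 := by
    rw [LPN.sum_pi_prod (fun x => if x = 0 then (1-ρ) else ρ/((q:ℝ)-1)),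
      LPN.sum_zmod_ite (by omega)]
    have : (1-ρ) + ((q:ℝ)-1) * (ρ/((q:ℝ)-1)) = 1 := by field_simp; ring
    rw [this, one_pow]
  set B := Finset.univ.filter (fun y : Fin m → ZMod q => (hammingNorm y : ℝ) ≤ ρ * m) with hB
  have hcard : (B.card : ℝ) * Real.exp ((m:ℝ) * Real.log (1-ρ) + (ρ*(m:ℝ)) * L) ≤ 1 := by
    calc (B.card : ℝ) * Real.exp ((m:ℝ) * Real.log (1-ρ) + (ρ*(m:ℝ)) * L)
        = ∑ _y ∈ B, Real.exp ((m:ℝ) * Real.log (1-ρ) + (ρ*(m:ℝ)) * L) := by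
          rw [Finset.sum_const, nsmul_eq_mul]
      _ ≤ ∑ y ∈ B, ∏ i, (if y i = 0 then (1-ρ) else ρ/((q:ℝ)-1)) := by
          apply Finset.sum_le_sum
          intro y hy
          rw [hweight y]
          apply Real.exp_le_exp.2
          rw [hB, Finset.mem_filter] at hy
          nlinarith [hy.2]
      _ ≤ ∑ y : Fin m → ZMod q, ∏ i, (if y i = 0 then (1-ρ) else ρ/((q:ℝ)-1)) :=
          Finset.sum_le_sum_of_subset_of_nonneg (Finset.filter_subset _ _) (fun y _ _ => hwnn y)
      _ = 1 := hsum
  calc (B.card : ℝ) ≤ Real.exp (-((m:ℝ) * Real.log (1-ρ) + (ρ*(m:ℝ)) * L)) := by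
        rw [Real.exp_neg, ← one_div, le_div_iff₀ (Real.exp_pos _)]
        exact hcard
    _ = Real.exp ((m:ℝ) * (ρ * Real.log ((q:ℝ)-1) - ρ * Real.log ρ - (1-ρ) * Real.log (1-ρ))) := by
        congr 1
        simp only [hL]; ring

/-- Fibers of `A ↦ A ⬝ d` for `d ≠ 0` are small. -/
lemma LPN.fiber_card_le (q n m : ℕ) [NeZero q] (hq : q.Prime) {d : Fin n → ZMod q} (hd : d ≠ 0)
    (y : Fin m → ZMod q) :
    (Finset.univ.filter (fun A : Matrix (Fin m) (Fin n) (ZMod q) => A.mulVec d = y)).card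
      ≤ q ^ ((n-1) * m) := by
  haveI := Fact.mk hq
  obtain ⟨j0, hj0⟩ : ∃ j, d j ≠ 0 := by
    by_contra h
    push_neg at h
    exact hd (funext h)
  have hcard : Fintype.card ((Fin m × {j : Fin n // j ≠ j0}) → ZMod q) = q ^ ((n-1) * m) := by
    rw [Fintype.card_fun, Fintype.card_prod, Fintype.card_fin, ZMod.card]
    congr 1
    have : Fintype.card {j : Fin n // j ≠ j0} = n - 1 := by
      rw [Fintype.card_subtype_compl, Fintype.card_subtype_eq, Fintype.card_fin]
    rw [this, Nat.mul_comm]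
  rw [← hcard, ← Finset.card_univ]
  apply Finset.card_le_card_of_injOn (fun A => fun p => A p.1 p.2.1) (fun _ _ => Finset.mem_univ _)
  intro A hA B hB hAB
  simp only [Finset.coe_filter, Set.mem_setOf_eq, Finset.mem_univ, true_and] at hA hB
  funext i j
  by_cases hj : j = j0
  · subst hj
    have hAi : A.mulVec d i = B.mulVec d i := by rw [hA, hB]
    simp only [Matrix.mulVec, dotProduct] at hAi
    rw [← Finset.add_sum_erase _ _ (Finset.mem_univ j),
      ← Finset.add_sum_erase _ _ (Finset.mem_univ j)] at hAi
    have htail : ∑ x ∈ Finset.univ.erase j, A i x * d x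
        = ∑ x ∈ Finset.univ.erase j, B i x * d x := by
      apply Finset.sum_congr rfl
      intro x hx
      have hxj : x ≠ j := Finset.ne_of_mem_erase hx
      have := congrFun hAB (i, ⟨x, hxj⟩)
      simp only at this
      rw [this]
    rw [htail] at hAi
    exact mul_right_cancel₀ hj0 (add_right_cancel hAi)
  · have := congrFun hAB (i, ⟨j, hj⟩)
    simpa using this

lemma LPN.badA_card_le (q n m : ℕ) [NeZero q] (hq : q.Prime) {d : Fin n → ZMod q} (hd : d ≠ 0)
    (R : ℝ) :
    (Finset.univ.filter (fun A : Matrix (Fin m) (Fin n) (ZMod q) =>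
        (hammingNorm (A.mulVec d) : ℝ) ≤ R)).card
      ≤ (Finset.univ.filter (fun y : Fin m → ZMod q => (hammingNorm y : ℝ) ≤ R)).card
        * q ^ ((n-1) * m) := by
  classical
  rw [Finset.card_eq_sum_card_fiberwise (f := fun A => A.mulVec d)
    (t := Finset.univ.filter (fun y : Fin m → ZMod q => (hammingNorm y : ℝ) ≤ R))
    (fun A hA => by
      simp only [Finset.mem_coe, Finset.mem_filter, Finset.mem_univ, true_and] at hA ⊢
      exact hA)]
  calc ∑ y ∈ Finset.univ.filter (fun y : Fin m → ZMod q => (hammingNorm y : ℝ) ≤ R),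
        ((Finset.univ.filter (fun A : Matrix (Fin m) (Fin n) (ZMod q) =>
          (hammingNorm (A.mulVec d) : ℝ) ≤ R)).filter (fun A => A.mulVec d = y)).card
      ≤ ∑ _y ∈ Finset.univ.filter (fun y : Fin m → ZMod q => (hammingNorm y : ℝ) ≤ R),
          q ^ ((n-1) * m) := by
        apply Finset.sum_le_sum
        intro y _
        calc ((Finset.univ.filter (fun A : Matrix (Fin m) (Fin n) (ZMod q) =>
              (hammingNorm (A.mulVec d) : ℝ) ≤ R)).filter (fun A => A.mulVec d = y)).card
            ≤ (Finset.univ.filter (fun A : Matrix (Fin m) (Fin n) (ZMod q) =>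
              A.mulVec d = y)).card := by
              apply Finset.card_le_card
              intro A hA
              rw [Finset.mem_filter] at hA ⊢
              exact ⟨Finset.mem_univ _, hA.2⟩
          _ ≤ q ^ ((n-1) * m) := LPN.fiber_card_le q n m hq hd y
    _ = (Finset.univ.filter (fun y : Fin m → ZMod q => (hammingNorm y : ℝ) ≤ R)).card
        * q ^ ((n-1) * m) := by rw [Finset.sum_const, smul_eq_mul]

lemma LPN.bad2A_card_le (q n m : ℕ) [NeZero q] (hq : q.Prime) (R : ℝ) :
    (Finset.univ.filter (fun A : Matrix (Fin m) (Fin n) (ZMod q) =>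
        ∃ d : Fin n → ZMod q, d ≠ 0 ∧ (hammingNorm (A.mulVec d) : ℝ) ≤ R)).card
      ≤ q ^ n * ((Finset.univ.filter (fun y : Fin m → ZMod q =>
          (hammingNorm y : ℝ) ≤ R)).card * q ^ ((n-1) * m)) := by
  classical
  have hsub : (Finset.univ.filter (fun A : Matrix (Fin m) (Fin n) (ZMod q) =>
      ∃ d : Fin n → ZMod q, d ≠ 0 ∧ (hammingNorm (A.mulVec d) : ℝ) ≤ R))
      ⊆ (Finset.univ.erase (0 : Fin n → ZMod q)).biUnion (fun d =>
        Finset.univ.filter (fun A : Matrix (Fin m) (Fin n) (ZMod q) =>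
          (hammingNorm (A.mulVec d) : ℝ) ≤ R)) := by
    intro A hA
    rw [Finset.mem_filter] at hA
    obtain ⟨-, d, hd, hAd⟩ := hA
    rw [Finset.mem_biUnion]
    exact ⟨d, Finset.mem_erase.2 ⟨hd, Finset.mem_univ _⟩,
      Finset.mem_filter.2 ⟨Finset.mem_univ _, hAd⟩⟩
  calc _ ≤ ((Finset.univ.erase (0 : Fin n → ZMod q)).biUnion (fun d =>
        Finset.univ.filter (fun A : Matrix (Fin m) (Fin n) (ZMod q) =>
          (hammingNorm (A.mulVec d) : ℝ) ≤ R))).card := Finset.card_le_card hsub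
    _ ≤ ∑ d ∈ Finset.univ.erase (0 : Fin n → ZMod q),
        (Finset.univ.filter (fun A : Matrix (Fin m) (Fin n) (ZMod q) =>
          (hammingNorm (A.mulVec d) : ℝ) ≤ R)).card := Finset.card_biUnion_le
    _ ≤ ∑ _d ∈ Finset.univ.erase (0 : Fin n → ZMod q),
        ((Finset.univ.filter (fun y : Fin m → ZMod q => (hammingNorm y : ℝ) ≤ R)).card
          * q ^ ((n-1) * m)) := by
        apply Finset.sum_le_sum
        intro d hd
        exact LPN.badA_card_le q n m hq (Finset.mem_erase.1 hd).1 R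
    _ ≤ q ^ n * ((Finset.univ.filter (fun y : Fin m → ZMod q =>
          (hammingNorm y : ℝ) ≤ R)).card * q ^ ((n-1) * m)) := by
        rw [Finset.sum_const, smul_eq_mul]
        apply Nat.mul_le_mul_right
        calc (Finset.univ.erase (0 : Fin n → ZMod q)).card ≤ Finset.univ.card :=
              Finset.card_le_card (Finset.erase_subset _ _)
          _ = q ^ n := by rw [Finset.card_univ, Fintype.card_fun, ZMod.card, Fintype.card_fin]

lemma LPN.real_qary_eq (q : ℕ) (ρ : ℝ) :
    Real.qaryEntropy q ρ
      = ρ * Real.log ((q:ℝ)-1) - ρ * Real.log ρ - (1-ρ) * Real.log (1-ρ) := by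
  unfold Real.qaryEntropy Real.binEntropy
  rw [Real.log_inv, Real.log_inv]
  push_cast
  ring

lemma LPN.real_qary_endpoint (q : ℕ) (hq : 2 ≤ q) :
    Real.qaryEntropy q (1 - 1/(q:ℝ)) = Real.log q := by
  have hqR : (2:ℝ) ≤ q := by exact_mod_cast hq
  have hq0 : (0:ℝ) < q := by linarith
  have hq1 : (0:ℝ) < (q:ℝ) - 1 := by linarith
  rw [LPN.real_qary_eq q]
  have h1 : 1 - 1/(q:ℝ) = ((q:ℝ)-1)/q := by field_simp
  have h2 : 1 - (1 - 1/(q:ℝ)) = 1/(q:ℝ) := by ring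
  rw [h2, h1, Real.log_div (ne_of_gt hq1) (ne_of_gt hq0),
    Real.log_div one_ne_zero (ne_of_gt hq0), Real.log_one]
  field_simp
  ring

lemma LPN.our_qary_lt_one (q : ℕ) (hq : 2 ≤ q) {ρ : ℝ} (hρ0 : 0 < ρ)
    (hρq : ρ < 1 - 1/(q:ℝ)) : qaryEntropy q ρ < 1 := by
  have hqR : (2:ℝ) ≤ q := by exact_mod_cast hq
  have hlogq : 0 < Real.log q := Real.log_pos (by linarith)
  have h0 : (0:ℝ) ≤ 1 - 1/(q:ℝ) := by
    have : 1/(q:ℝ) ≤ 1/2 := by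
      apply div_le_div_of_nonneg_left <;> linarith
    linarith
  have hmem1 : ρ ∈ Set.Icc (0:ℝ) (1 - 1/(q:ℝ)) := ⟨hρ0.le, hρq.le⟩
  have hmem2 : (1 - 1/(q:ℝ)) ∈ Set.Icc (0:ℝ) (1 - 1/(q:ℝ)) := ⟨h0, le_refl _⟩
  have hlt : Real.qaryEntropy q ρ < Real.log q := by
    have := Real.qaryEntropy_strictMonoOn hq hmem1 hmem2 hρq
    rwa [LPN.real_qary_endpoint q hq] at this
  have heq : qaryEntropy q ρ = Real.qaryEntropy q ρ / Real.log q := by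
    rw [LPN.real_qary_eq q]
    unfold qaryEntropy Real.logb
    ring
  rw [heq, div_lt_one hlogq]
  exact hlt

lemma LPN.measure_setOf_eq_sum {α : Type*} [Fintype α] [MeasurableSpace α]
    [MeasurableSingletonClass α] (μ : Measure α) (P : α → Prop) [DecidablePred P] :
    μ {x | P x} = ∑ x ∈ Finset.univ.filter P, μ {x} := by
  have h := MeasureTheory.sum_measure_preimage_singleton (μ := μ) (f := id)
      (Finset.univ.filter P) (fun y _ => measurableSet_eq)
  simpa [Set.preimage_id, Set.ext_iff] using h.symm

lemma LPN.ennreal_div_helper (a b c : ℕ) (hb : 0 < b) (h : a * b ≤ c) :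
    (a : ℝ≥0∞) * ((c : ℕ) : ℝ≥0∞)⁻¹ ≤ ((b : ℕ) : ℝ≥0∞)⁻¹ := by
  have hb0 : ((b : ℕ) : ℝ≥0∞) ≠ 0 := by
    simp only [ne_eq, Nat.cast_eq_zero]
    omega
  have hbt : ((b : ℕ) : ℝ≥0∞) ≠ ⊤ := ENNReal.natCast_ne_top b
  have hbb : ((b : ℕ) : ℝ≥0∞) * ((b : ℕ) : ℝ≥0∞)⁻¹ = 1 := ENNReal.mul_inv_cancel hb0 hbt
  have h1 : (a : ℝ≥0∞) * b ≤ (c : ℝ≥0∞) := by exact_mod_cast h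
  calc (a : ℝ≥0∞) * ((c : ℕ) : ℝ≥0∞)⁻¹
      = ((a : ℝ≥0∞) * b) * ((c : ℕ) : ℝ≥0∞)⁻¹ * ((b : ℕ) : ℝ≥0∞)⁻¹ := by
        rw [show ((a : ℝ≥0∞) * b) * ((c : ℕ) : ℝ≥0∞)⁻¹ * ((b : ℕ) : ℝ≥0∞)⁻¹
            = ((a : ℝ≥0∞) * ((c : ℕ) : ℝ≥0∞)⁻¹) * ((b : ℝ≥0∞) * ((b : ℕ) : ℝ≥0∞)⁻¹) from by ring,
          hbb, mul_one]
    _ ≤ ((c : ℝ≥0∞)) * ((c : ℕ) : ℝ≥0∞)⁻¹ * ((b : ℕ) : ℝ≥0∞)⁻¹ := by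
        gcongr
    _ ≤ ((b : ℕ) : ℝ≥0∞)⁻¹ := by
        rcases eq_or_ne ((c : ℕ) : ℝ≥0∞) 0 with h0 | h0
        · simp [h0]
        · rw [ENNReal.mul_inv_cancel h0 (ENNReal.natCast_ne_top c), one_mul]

end LPNAux

set_option maxHeartbeats 1600000 in
/-- **Unique decodability of random LPN instances over F_q.**
Let `q` be prime, `0 < η < (1/4)(1 - 1/q)` and `m > (2/(1 - H_q(4η)))·n`.  Sample `A`
uniformly from `F_q^{m×n}`, `s` uniformly from `F_q^n` and `e ∼ (Ber_q(η))^m`, all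
independently (this is expressed by specifying the joint point masses), and set
`b = A·s + e`.  Then with probability at least `1 - q^{-n} - exp(-ηm/3)`, the secret `s`
is the unique vector `v ∈ F_q^n` with `‖b - A·v‖₀ ≤ 2ηm`. -/
theorem lpn_unique_decodability
    (q n m : ℕ) (hq : q.Prime) [NeZero q] (hn : 0 < n) (hm : 0 < m)
    (η : ℝ) (hη0 : 0 < η) (hη1 : η < (1 / 4) * (1 - 1 / q))
    (hmn : (2 / (1 - qaryEntropy q (4 * η))) * n < (m : ℝ))
    (μ : Measure (Matrix (Fin m) (Fin n) (ZMod q) × (Fin n → ZMod q) × (Fin m → ZMod q)))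
    [IsProbabilityMeasure μ]
    (hμ : ∀ (A : Matrix (Fin m) (Fin n) (ZMod q)) (s : Fin n → ZMod q) (e : Fin m → ZMod q),
      μ {(A, s, e)} =
        (Fintype.card (Matrix (Fin m) (Fin n) (ZMod q)) : ℝ≥0∞)⁻¹ *
        ((Fintype.card (Fin n → ZMod q) : ℝ≥0∞)⁻¹ *
          ∏ i, (if e i = 0 then ENNReal.ofReal ((1 - η) + η / q)
            else ENNReal.ofReal (η / q)))) :
    1 - ((q : ℝ≥0∞) ^ n)⁻¹ - ENNReal.ofReal (Real.exp (-(η * m) / 3)) ≤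
      μ {p | ∀ v : Fin n → ZMod q,
        (hammingNorm (p.1.mulVec p.2.1 + p.2.2 - p.1.mulVec v) : ℝ) ≤ 2 * η * m ↔
          v = p.2.1} := by
  classical
  haveI : MeasurableSingletonClass (Matrix (Fin m) (Fin n) (ZMod q)) :=
    (inferInstance : MeasurableSingletonClass (Fin m → Fin n → ZMod q))
  have hq2 : 2 ≤ q := hq.two_le
  have hqR : (2:ℝ) ≤ q := by exact_mod_cast hq2
  have hqpos : (0:ℝ) < q := by linarith
  have hinvq : (0:ℝ) < 1/(q:ℝ) := by positivity
  have hinvq1 : 1/(q:ℝ) ≤ 1/2 := by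
    apply div_le_div_of_nonneg_left <;> linarith
  have hη14 : η < 1/4 := by nlinarith
  have hρ0 : (0:ℝ) < 4*η := by linarith
  have hρq : 4*η < 1 - 1/(q:ℝ) := by nlinarith
  have hρ1 : 4*η < 1 := by linarith
  have hH1 : qaryEntropy q (4*η) < 1 := LPN.our_qary_lt_one q hq2 hρ0 hρq
  have h1H : 0 < 1 - qaryEntropy q (4*η) := by linarith
  have hm2n : 2*(n:ℝ) < (m:ℝ) * (1 - qaryEntropy q (4*η)) := by
    rw [div_mul_eq_mul_div, div_lt_iff₀ h1H] at hmn
    linarith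
  set cA : ℝ≥0∞ := (Fintype.card (Matrix (Fin m) (Fin n) (ZMod q)) : ℝ≥0∞) with hcA
  set cS : ℝ≥0∞ := (Fintype.card (Fin n → ZMod q) : ℝ≥0∞) with hcS
  set W : (Fin m → ZMod q) → ℝ≥0∞ := fun e =>
    ∏ i, (if e i = 0 then ENNReal.ofReal ((1 - η) + η / q)
      else ENNReal.ofReal (η / q)) with hWdef
  have hμ' : ∀ A s e, μ {(A, s, e)} = cA⁻¹ * (cS⁻¹ * W e) := hμ
  have hcA0 : cA ≠ 0 := by
    rw [hcA]; exact Nat.cast_ne_zero.2 Fintype.card_ne_zero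
  have hcAt : cA ≠ ⊤ := by rw [hcA]; exact ENNReal.natCast_ne_top _
  have hcS0 : cS ≠ 0 := by
    rw [hcS]; exact Nat.cast_ne_zero.2 Fintype.card_ne_zero
  have hcSt : cS ≠ ⊤ := by rw [hcS]; exact ENNReal.natCast_ne_top _
  have hp1' : (0:ℝ) ≤ η/(q:ℝ) := by positivity
  have hp0' : (0:ℝ) ≤ (1 - η) + η/(q:ℝ) := by nlinarith
  have hrealWnn : ∀ e : Fin m → ZMod q,
      0 ≤ ∏ i, (if e i = 0 then (1-η) + η/(q:ℝ) else η/(q:ℝ)) :=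
    fun e => Finset.prod_nonneg (fun i _ => by by_cases h : e i = 0 <;> simp [h, hp0', hp1'])
  have hWof : ∀ e, W e
      = ENNReal.ofReal (∏ i, if e i = 0 then (1-η) + η/(q:ℝ) else η/(q:ℝ)) := by
    intro e
    rw [ENNReal.ofReal_prod_of_nonneg
      (fun i _ => by by_cases h : e i = 0 <;> simp [h, hp0', hp1'])]
    simp only [hWdef]
    exact Finset.prod_congr rfl (fun i _ => by by_cases h : e i = 0 <;> simp [h])
  have hSE : ∑ e : Fin m → ZMod q, W e = 1 := by
    rw [Finset.sum_congr rfl (fun e _ => hWof e),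
      ← ENNReal.ofReal_sum_of_nonneg (fun e _ => hrealWnn e),
      LPN.sum_pi_prod (fun x => if x = 0 then (1-η) + η/(q:ℝ) else η/(q:ℝ)),
      LPN.sum_zmod_ite (by omega)]
    have hbase : ((1 - η) + η/(q:ℝ)) + ((q:ℝ)-1) * (η/(q:ℝ)) = 1 := by
      field_simp
      ring
    rw [hbase, one_pow, ENNReal.ofReal_one]
  have hexpand : ∀ (P : (Matrix (Fin m) (Fin n) (ZMod q) ×
        (Fin n → ZMod q) × (Fin m → ZMod q)) → Prop),
      μ {p | P p} = ∑ A, ∑ s, ∑ e, if P (A, s, e) then cA⁻¹ * (cS⁻¹ * W e) else 0 := by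
    intro P
    rw [LPN.measure_setOf_eq_sum μ P, Finset.sum_filter, Fintype.sum_prod_type]
    refine Finset.sum_congr rfl (fun A _ => ?_)
    rw [Fintype.sum_prod_type]
    refine Finset.sum_congr rfl (fun s _ => Finset.sum_congr rfl (fun e _ => ?_))
    by_cases h : P (A, s, e)
    · simp only [if_pos h]; exact hμ' A s e
    · simp only [if_neg h]
  have key1 : ∀ f : (Fin m → ZMod q) → ℝ≥0∞,
      ∑ _A : Matrix (Fin m) (Fin n) (ZMod q), ∑ _s : Fin n → ZMod q,
        ∑ e, cA⁻¹ * (cS⁻¹ * f e) = ∑ e, f e := by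
    intro f
    calc ∑ _A : Matrix (Fin m) (Fin n) (ZMod q), ∑ _s : Fin n → ZMod q,
          ∑ e, cA⁻¹ * (cS⁻¹ * f e)
        = ∑ _A : Matrix (Fin m) (Fin n) (ZMod q), ∑ _s : Fin n → ZMod q,
          cA⁻¹ * (cS⁻¹ * ∑ e, f e) := by
          refine Finset.sum_congr rfl fun A _ => Finset.sum_congr rfl fun s _ => ?_
          rw [← Finset.mul_sum, ← Finset.mul_sum]
      _ = cA * (cS * (cA⁻¹ * (cS⁻¹ * ∑ e, f e))) := by
          rw [Finset.sum_const, Finset.sum_const, Finset.card_univ, Finset.card_univ,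
            nsmul_eq_mul, nsmul_eq_mul, ← hcA, ← hcS]
      _ = (cA * cA⁻¹) * ((cS * cS⁻¹) * (∑ e, f e)) := by ring
      _ = ∑ e, f e := by
          rw [ENNReal.mul_inv_cancel hcA0 hcAt, ENNReal.mul_inv_cancel hcS0 hcSt,
            one_mul, one_mul]
  have key2 : ∀ g : Matrix (Fin m) (Fin n) (ZMod q) → ℝ≥0∞,
      ∑ A, ∑ _s : Fin n → ZMod q, ∑ e, g A * (cS⁻¹ * W e) = ∑ A, g A := by
    intro g
    calc ∑ A, ∑ _s : Fin n → ZMod q, ∑ e, g A * (cS⁻¹ * W e)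
        = ∑ A, ∑ _s : Fin n → ZMod q, g A * (cS⁻¹ * ∑ e, W e) := by
          refine Finset.sum_congr rfl fun A _ => Finset.sum_congr rfl fun s _ => ?_
          rw [← Finset.mul_sum, ← Finset.mul_sum]
      _ = ∑ A, cS * (g A * (cS⁻¹ * 1)) := by
          refine Finset.sum_congr rfl fun A _ => ?_
          rw [hSE, Finset.sum_const, Finset.card_univ, nsmul_eq_mul, ← hcS]
      _ = ∑ A, g A := by
          refine Finset.sum_congr rfl fun A _ => ?_
          rw [mul_one, show cS * (g A * cS⁻¹) = g A * (cS * cS⁻¹) from by ring,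
            ENNReal.mul_inv_cancel hcS0 hcSt, mul_one]
  -- bound on the first bad event
  have hbad1 : μ {p : Matrix (Fin m) (Fin n) (ZMod q) ×
        (Fin n → ZMod q) × (Fin m → ZMod q) |
        (2*η*m : ℝ) < (hammingNorm p.2.2 : ℝ)}
      ≤ ENNReal.ofReal (Real.exp (-(η*m)/3)) := by
    rw [hexpand (fun p => (2*η*m : ℝ) < (hammingNorm p.2.2 : ℝ))]
    show ∑ _A : Matrix (Fin m) (Fin n) (ZMod q), ∑ _s : Fin n → ZMod q, ∑ e,
      (if (2*η*m : ℝ) < (hammingNorm e : ℝ) then cA⁻¹ * (cS⁻¹ * W e) else 0) ≤ _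
    calc ∑ _A : Matrix (Fin m) (Fin n) (ZMod q), ∑ _s : Fin n → ZMod q, ∑ e,
          (if (2*η*m : ℝ) < (hammingNorm e : ℝ) then cA⁻¹ * (cS⁻¹ * W e) else 0)
        = ∑ _A : Matrix (Fin m) (Fin n) (ZMod q), ∑ _s : Fin n → ZMod q, ∑ e,
          cA⁻¹ * (cS⁻¹ * (if (2*η*m : ℝ) < (hammingNorm e : ℝ) then W e else 0)) := by
          refine Finset.sum_congr rfl fun A _ => Finset.sum_congr rfl fun s _ =>
            Finset.sum_congr rfl fun e _ => ?_
          by_cases h : (2*η*m : ℝ) < (hammingNorm e : ℝ) <;> simp [h]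
      _ = ∑ e, (if (2*η*m : ℝ) < (hammingNorm e : ℝ) then W e else 0) :=
          key1 (fun e => if (2*η*m : ℝ) < (hammingNorm e : ℝ) then W e else 0)
      _ = ∑ e ∈ Finset.univ.filter
            (fun e : Fin m → ZMod q => (2*η*m : ℝ) < (hammingNorm e : ℝ)), W e :=
          (Finset.sum_filter _ _).symm
      _ = ENNReal.ofReal (∑ e ∈ Finset.univ.filter
            (fun e : Fin m → ZMod q => (2*η*m : ℝ) < (hammingNorm e : ℝ)),
            ∏ i, (if e i = 0 then (1-η) + η/(q:ℝ) else η/(q:ℝ))) := by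
          rw [Finset.sum_congr rfl (fun e _ => hWof e),
            ← ENNReal.ofReal_sum_of_nonneg (fun e _ => hrealWnn e)]
      _ ≤ ENNReal.ofReal (Real.exp (-(η*m)/3)) :=
          ENNReal.ofReal_le_ofReal (LPN.chernoff_real q m (by omega) hη0 hη14)
  -- bound on the second bad event
  have hbad2 : μ {p : Matrix (Fin m) (Fin n) (ZMod q) ×
        (Fin n → ZMod q) × (Fin m → ZMod q) |
        ∃ d : Fin n → ZMod q, d ≠ 0 ∧ (hammingNorm (p.1.mulVec d) : ℝ) ≤ 4*η*m}
      ≤ ((q : ℝ≥0∞) ^ n)⁻¹ := by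
    set P2 : (Matrix (Fin m) (Fin n) (ZMod q) ×
        (Fin n → ZMod q) × (Fin m → ZMod q)) → Prop := fun p =>
      ∃ d : Fin n → ZMod q, d ≠ 0 ∧ (hammingNorm (p.1.mulVec d) : ℝ) ≤ 4*η*m with hP2
    clear_value P2
    rw [hexpand P2]
    have heval : ∑ A : Matrix (Fin m) (Fin n) (ZMod q), ∑ s : Fin n → ZMod q, ∑ e,
        (if P2 (A, s, e) then cA⁻¹ * (cS⁻¹ * W e) else 0)
        = ((Finset.univ.filter (fun A : Matrix (Fin m) (Fin n) (ZMod q) =>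
          ∃ d : Fin n → ZMod q, d ≠ 0 ∧ (hammingNorm (A.mulVec d) : ℝ) ≤ 4*η*m)).card
            : ℝ≥0∞) * cA⁻¹ := by
      calc ∑ A : Matrix (Fin m) (Fin n) (ZMod q), ∑ s : Fin n → ZMod q, ∑ e,
          (if P2 (A, s, e) then cA⁻¹ * (cS⁻¹ * W e) else 0)
          = ∑ A : Matrix (Fin m) (Fin n) (ZMod q), ∑ _s : Fin n → ZMod q, ∑ e,
            (if (∃ d : Fin n → ZMod q, d ≠ 0 ∧ (hammingNorm (A.mulVec d) : ℝ) ≤ 4*η*m)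
              then cA⁻¹ else 0) * (cS⁻¹ * W e) := by
            refine Finset.sum_congr rfl fun A _ => Finset.sum_congr rfl fun s _ =>
              Finset.sum_congr rfl fun e _ => ?_
            simp only [hP2]
            by_cases h : (∃ d : Fin n → ZMod q, d ≠ 0 ∧
              (hammingNorm (A.mulVec d) : ℝ) ≤ 4*η*m) <;> simp [h]
        _ = ∑ A : Matrix (Fin m) (Fin n) (ZMod q),
            (if (∃ d : Fin n → ZMod q, d ≠ 0 ∧ (hammingNorm (A.mulVec d) : ℝ) ≤ 4*η*m)
              then cA⁻¹ else 0) :=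
            key2 (fun A => if (∃ d : Fin n → ZMod q, d ≠ 0 ∧
              (hammingNorm (A.mulVec d) : ℝ) ≤ 4*η*m) then cA⁻¹ else 0)
        _ = ∑ A ∈ Finset.univ.filter (fun A : Matrix (Fin m) (Fin n) (ZMod q) =>
            ∃ d : Fin n → ZMod q, d ≠ 0 ∧ (hammingNorm (A.mulVec d) : ℝ) ≤ 4*η*m), cA⁻¹ :=
            (Finset.sum_filter _ _).symm
        _ = _ := by rw [Finset.sum_const, nsmul_eq_mul]
    refine le_trans (le_of_eq heval) ?_
    -- counting bound
    have hcount := LPN.bad2A_card_le q n m hq (4*η*(m:ℝ))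
    have hball := LPN.ball_card_le q m hq2 hρ0 hρq
    have hlogq : 0 < Real.log q := Real.log_pos (by linarith)
    have hHlogq : qaryEntropy q (4*η) * Real.log q
        = (4*η)*Real.log ((q:ℝ)-1) - (4*η)*Real.log (4*η) - (1-(4*η))*Real.log (1-(4*η)) := by
      unfold qaryEntropy Real.logb
      field_simp
    have hfinal_nat : (Finset.univ.filter (fun A : Matrix (Fin m) (Fin n) (ZMod q) =>
        ∃ d : Fin n → ZMod q, d ≠ 0 ∧ (hammingNorm (A.mulVec d) : ℝ) ≤ 4*η*m)).card
        * q^n ≤ q^(n*m) := by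
      have hK1 : ((Finset.univ.filter (fun A : Matrix (Fin m) (Fin n) (ZMod q) =>
          ∃ d : Fin n → ZMod q, d ≠ 0 ∧ (hammingNorm (A.mulVec d) : ℝ) ≤ 4*η*m)).card : ℝ)
          ≤ (q:ℝ)^n * (((Finset.univ.filter (fun y : Fin m → ZMod q =>
            (hammingNorm y : ℝ) ≤ 4*η*(m:ℝ))).card : ℝ) * (q:ℝ)^((n-1)*m)) := by
        exact_mod_cast hcount
      have hcast : (((n-1)*m : ℕ) : ℝ) = ((n:ℝ)-1)*m := by
        push_cast [Nat.cast_sub hn]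
        ring
      have hBc : ((Finset.univ.filter (fun y : Fin m → ZMod q =>
          (hammingNorm y : ℝ) ≤ 4*η*(m:ℝ))).card : ℝ)
          ≤ Real.exp ((m:ℝ) * (qaryEntropy q (4*η) * Real.log q)) := by
        rw [hHlogq]
        exact hball
      have e1 : (q:ℝ)^n = Real.exp ((n:ℝ) * Real.log q) := LPN.pow_eq_exp _ hqpos n
      have e2 : (q:ℝ)^((n-1)*m) = Real.exp ((((n:ℝ)-1)*m) * Real.log q) := by
        rw [LPN.pow_eq_exp _ hqpos, hcast]
      have e3 : (q:ℝ)^(n*m) = Real.exp (((n:ℝ)*m) * Real.log q) := by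
        rw [LPN.pow_eq_exp _ hqpos]
        push_cast
        ring_nf
      have hreal : ((Finset.univ.filter (fun A : Matrix (Fin m) (Fin n) (ZMod q) =>
          ∃ d : Fin n → ZMod q, d ≠ 0 ∧ (hammingNorm (A.mulVec d) : ℝ) ≤ 4*η*m)).card : ℝ)
          * (q:ℝ)^n ≤ (q:ℝ)^(n*m) := by
        calc ((Finset.univ.filter (fun A : Matrix (Fin m) (Fin n) (ZMod q) =>
            ∃ d : Fin n → ZMod q, d ≠ 0 ∧ (hammingNorm (A.mulVec d) : ℝ) ≤ 4*η*m)).card : ℝ)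
            * (q:ℝ)^n
            ≤ ((q:ℝ)^n * (((Finset.univ.filter (fun y : Fin m → ZMod q =>
              (hammingNorm y : ℝ) ≤ 4*η*(m:ℝ))).card : ℝ) * (q:ℝ)^((n-1)*m))) * (q:ℝ)^n := by
              apply mul_le_mul_of_nonneg_right hK1 (by positivity)
          _ ≤ ((q:ℝ)^n * (Real.exp ((m:ℝ) * (qaryEntropy q (4*η) * Real.log q))
              * (q:ℝ)^((n-1)*m))) * (q:ℝ)^n := by
              gcongr
          _ = Real.exp (((n:ℝ) + ((m:ℝ) * (qaryEntropy q (4*η) * Real.log q) / Real.log q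
                + ((n:ℝ)-1)*m) + (n:ℝ)) * Real.log q) := by
              rw [e1, e2, ← Real.exp_add, ← Real.exp_add, ← Real.exp_add]
              congr 1
              field_simp
          _ ≤ Real.exp (((n:ℝ)*m) * Real.log q) := by
              apply Real.exp_le_exp.2
              have hfs : (m:ℝ) * (qaryEntropy q (4*η) * Real.log q) / Real.log q
                  = (m:ℝ) * qaryEntropy q (4*η) := by
                field_simp
              rw [hfs]
              have hnn : (m:ℝ) * qaryEntropy q (4*η) ≤ (m:ℝ) - 2*n := by nlinarith
              nlinarith [hlogq, mul_le_mul_of_nonneg_right hnn hlogq.le]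
          _ = (q:ℝ)^(n*m) := e3.symm
      exact_mod_cast hreal
    have hstep := LPN.ennreal_div_helper _ (q^n) (q^(n*m)) (pow_pos hq.pos n) hfinal_nat
    have hcAq : cA = ((q^(n*m) : ℕ) : ℝ≥0∞) := by
      rw [hcA]
      congr 1
      rw [show Fintype.card (Matrix (Fin m) (Fin n) (ZMod q))
          = Fintype.card (Fin m → Fin n → ZMod q) from rfl,
        Fintype.card_fun, Fintype.card_fun, ZMod.card, Fintype.card_fin, Fintype.card_fin,
        ← pow_mul]
    have hqn : ((q^n : ℕ) : ℝ≥0∞) = ((q:ℝ≥0∞))^n := by push_cast; ring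
    rw [hcAq, ← hqn]
    exact hstep
  -- inclusion of the good event
  have hincl : {p : Matrix (Fin m) (Fin n) (ZMod q) ×
        (Fin n → ZMod q) × (Fin m → ZMod q) |
        ¬((2*η*m : ℝ) < (hammingNorm p.2.2 : ℝ)) ∧
        ¬(∃ d : Fin n → ZMod q, d ≠ 0 ∧ (hammingNorm (p.1.mulVec d) : ℝ) ≤ 4*η*m)}
      ⊆ {p | ∀ v : Fin n → ZMod q,
        (hammingNorm (p.1.mulVec p.2.1 + p.2.2 - p.1.mulVec v) : ℝ) ≤ 2 * η * m ↔
          v = p.2.1} := by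
    rintro ⟨A, s, e⟩ ⟨h1, h2⟩ v
    simp only [Set.mem_setOf_eq] at h1 h2 ⊢
    have he : (hammingNorm e : ℝ) ≤ 2*η*m := not_lt.1 h1
    constructor
    · intro hv
      by_contra hne
      apply h2
      refine ⟨s - v, sub_ne_zero_of_ne (fun hh => hne hh.symm), ?_⟩
      have hAd : A.mulVec (s - v) = (A.mulVec s + e - A.mulVec v) - e := by
        rw [Matrix.mulVec_sub]
        abel
      rw [hAd]
      have htri : hammingNorm ((A.mulVec s + e - A.mulVec v) - e)
          ≤ hammingNorm (A.mulVec s + e - A.mulVec v) + hammingNorm e := by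
        rw [show hammingNorm ((A.mulVec s + e - A.mulVec v) - e) = hammingDist (A.mulVec s + e - A.mulVec v) e from by simp only [hammingNorm, hammingDist, Pi.sub_apply, ne_eq, sub_eq_zero]]
        calc hammingDist (A.mulVec s + e - A.mulVec v) e
            ≤ hammingDist (A.mulVec s + e - A.mulVec v) 0 + hammingDist 0 e :=
              hammingDist_triangle _ _ _
          _ = hammingNorm (A.mulVec s + e - A.mulVec v) + hammingNorm e := by
              rw [hammingDist_zero_right, hammingDist_comm, hammingDist_zero_right]
      calc (hammingNorm ((A.mulVec s + e - A.mulVec v) - e) : ℝ)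
          ≤ (hammingNorm (A.mulVec s + e - A.mulVec v) : ℝ) + (hammingNorm e : ℝ) := by
            exact_mod_cast htri
        _ ≤ 2*η*m + 2*η*m := add_le_add hv he
        _ = 4*η*m := by ring
    · intro hv
      rw [hv, add_sub_cancel_left]
      exact he
  -- assemble
  have hms : MeasurableSet ({p : Matrix (Fin m) (Fin n) (ZMod q) ×
      (Fin n → ZMod q) × (Fin m → ZMod q) |
      (2*η*m : ℝ) < (hammingNorm p.2.2 : ℝ)} ∪
      {p | ∃ d : Fin n → ZMod q, d ≠ 0 ∧ (hammingNorm (p.1.mulVec d) : ℝ) ≤ 4*η*m}) :=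
    (Set.to_countable _).measurableSet
  calc 1 - ((q : ℝ≥0∞) ^ n)⁻¹ - ENNReal.ofReal (Real.exp (-(η * m) / 3))
      = 1 - (((q : ℝ≥0∞) ^ n)⁻¹ + ENNReal.ofReal (Real.exp (-(η * m) / 3))) := by
        rw [tsub_tsub]
    _ ≤ 1 - (μ {p : Matrix (Fin m) (Fin n) (ZMod q) ×
          (Fin n → ZMod q) × (Fin m → ZMod q) |
          ∃ d : Fin n → ZMod q, d ≠ 0 ∧ (hammingNorm (p.1.mulVec d) : ℝ) ≤ 4*η*m}
        + μ {p : Matrix (Fin m) (Fin n) (ZMod q) ×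
          (Fin n → ZMod q) × (Fin m → ZMod q) |
          (2*η*m : ℝ) < (hammingNorm p.2.2 : ℝ)}) :=
        tsub_le_tsub_left (add_le_add hbad2 hbad1) 1
    _ ≤ 1 - μ ({p : Matrix (Fin m) (Fin n) (ZMod q) ×
          (Fin n → ZMod q) × (Fin m → ZMod q) |
          (2*η*m : ℝ) < (hammingNorm p.2.2 : ℝ)} ∪
        {p | ∃ d : Fin n → ZMod q, d ≠ 0 ∧ (hammingNorm (p.1.mulVec d) : ℝ) ≤ 4*η*m}) := by
        apply tsub_le_tsub_left
        refine (measure_union_le _ _).trans ?_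
        rw [add_comm]
    _ = μ (({p : Matrix (Fin m) (Fin n) (ZMod q) ×
          (Fin n → ZMod q) × (Fin m → ZMod q) |
          (2*η*m : ℝ) < (hammingNorm p.2.2 : ℝ)} ∪
        {p | ∃ d : Fin n → ZMod q, d ≠ 0 ∧
          (hammingNorm (p.1.mulVec d) : ℝ) ≤ 4*η*m})ᶜ) :=
        (prob_compl_eq_one_sub hms).symm
    _ = μ {p : Matrix (Fin m) (Fin n) (ZMod q) ×
          (Fin n → ZMod q) × (Fin m → ZMod q) |
          ¬((2*η*m : ℝ) < (hammingNorm p.2.2 : ℝ)) ∧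
          ¬(∃ d : Fin n → ZMod q, d ≠ 0 ∧ (hammingNorm (p.1.mulVec d) : ℝ) ≤ 4*η*m)} := by
        congr 1
        ext p
        simp [not_or]
    _ ≤ μ {p | ∀ v : Fin n → ZMod q,
        (hammingNorm (p.1.mulVec p.2.1 + p.2.2 - p.1.mulVec v) : ℝ) ≤ 2 * η * m ↔
          v = p.2.1} := measure_mono hincl
end

section
/- Let q be a prime and n, σ positive integers with qσ ≤ (q−1)n, and set α = qσ/((q−1)n). Let a be drawn from (Ber_q(α))^n (each coordinate independently Ber_q(α)), and let u ∈ F_q^n be a nonzero vector with ‖u‖_0 = ℓ. Then Pr[⟨a, u⟩ ≠ 0] = (1 − 1/q)·(1 − (1 − α)^ℓ), and this quantity is at least σ/n. -/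
open MeasureTheory ProbabilityTheory Finset
open scoped ENNReal

private lemma hammingNorm_fin_succ {q : ℕ} (m : ℕ) (v : Fin (m+1) → ZMod q) :
    hammingNorm v = (if v 0 = 0 then 0 else 1)
      + hammingNorm (fun i : Fin m => v i.succ) := by
  simp only [hammingNorm, Finset.card_filter, Fin.sum_univ_succ]
  by_cases h : v 0 = 0 <;> simp [h]

private lemma aux_sum (q : ℕ) [Fact (Nat.Prime q)] (α : ℝ) :
    ∀ (n : ℕ) (u : Fin n → ZMod q) (c : ZMod q),
      (∑ a : Fin n → ZMod q,
        if (∑ i, a i * u i) = c then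
          ∏ i, (if a i = 0 then (1 - α) + α / q else α / q) else 0)
      = if c = 0 then (1-α)^(hammingNorm u) + (1-(1-α)^(hammingNorm u))/q
        else (1-(1-α)^(hammingNorm u))/q := by
  have hq0 : (q:ℝ) ≠ 0 := by
    have := (Fact.out : Nat.Prime q).two_le
    have : (2:ℝ) ≤ q := by exact_mod_cast this
    linarith
  intro n
  induction n with
  | zero =>
    intro u c
    have h0 : hammingNorm u = 0 := hammingNorm_eq_zero.mpr (Subsingleton.elim u 0)
    rw [h0, Fintype.sum_unique]
    simp only [Fin.sum_univ_zero, Fin.prod_univ_zero, pow_zero, sub_self, zero_div, add_zero]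
    rcases eq_or_ne c 0 with h | h
    · simp [h]
    · simp [h, Ne.symm h]
  | succ n ih =>
    intro u c
    rw [← Equiv.sum_comp (Fin.consEquiv (fun _ : Fin (n+1) => ZMod q)), Fintype.sum_prod_type]
    simp only [Fin.consEquiv_apply, Fin.sum_univ_succ, Fin.prod_univ_succ, Fin.cons_zero,
      Fin.cons_succ]
    have hstep : ∀ x : ZMod q,
        (∑ b : Fin n → ZMod q,
          if x * u 0 + (∑ i, b i * u i.succ) = c then
            (if x = 0 then (1 - α) + α / q else α / q) *
              ∏ i, (if b i = 0 then (1 - α) + α / q else α / q) else 0)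
        = (if x = 0 then (1 - α) + α / q else α / q) *
            (if c - x * u 0 = 0 then
              (1-α)^(hammingNorm fun i : Fin n => u i.succ) + (1-(1-α)^(hammingNorm fun i : Fin n => u i.succ))/q
            else (1-(1-α)^(hammingNorm fun i : Fin n => u i.succ))/q) := by
      intro x
      rw [← ih (fun i : Fin n => u i.succ) (c - x * u 0), Finset.mul_sum]
      refine Finset.sum_congr rfl fun b _ => ?_
      rw [mul_ite, mul_zero]
      congr 1
      · simp only [eq_iff_iff, eq_sub_iff_add_eq']
    simp only [hstep]
    set ℓ' := hammingNorm fun i : Fin n => u i.succ with hℓ'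
    have hGsum : ∑ y : ZMod q,
        (if y = 0 then (1-α)^ℓ' + (1-(1-α)^ℓ')/q else (1-(1-α)^ℓ')/q) = 1 := by
      have h1 : ∀ y : ZMod q,
          (if y = 0 then (1-α)^ℓ' + (1-(1-α)^ℓ')/q else (1-(1-α)^ℓ')/q)
          = (1-(1-α)^ℓ')/q + (if y = 0 then (1-α)^ℓ' else 0) := by
        intro y
        by_cases h : y = 0
        · rw [if_pos h, if_pos h, add_comm]
        · rw [if_neg h, if_neg h, add_zero]
      simp only [h1, Finset.sum_add_distrib, Finset.sum_const, Finset.sum_ite_eq',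
        Finset.mem_univ, if_true, Finset.card_univ, ZMod.card, nsmul_eq_mul]
      field_simp
      ring
    have hdecomp : ∀ (x : ZMod q) (r : ℝ),
        (if x = 0 then (1-α)+α/q else α/q) * r = α/q * r + (if x = 0 then (1-α) * r else 0) := by
      intro x r
      by_cases h : x = 0
      · rw [if_pos h, if_pos h]; ring
      · rw [if_neg h, if_neg h, add_zero]
    simp only [hstep, hdecomp]
    rw [Finset.sum_add_distrib, ← Finset.mul_sum, Finset.sum_ite_eq' Finset.univ (0 : ZMod q),
      if_pos (Finset.mem_univ _)]
    rw [hammingNorm_fin_succ n u, ← hℓ']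
    by_cases hu0 : u 0 = 0
    · rw [if_pos hu0, zero_add]
      have hc : ∀ x : ZMod q, c - x * u 0 = c := fun x => by rw [hu0, mul_zero, sub_zero]
      simp only [hc]
      rw [Finset.sum_const, Finset.card_univ, ZMod.card, nsmul_eq_mul]
      rcases eq_or_ne c 0 with h | h
      · simp only [if_pos h]
        field_simp
        ring
      · simp only [if_neg h]
        field_simp
        ring
    · have hbij : (∑ x : ZMod q,
          (if c - x * u 0 = 0 then (1-α)^ℓ' + (1-(1-α)^ℓ')/q else (1-(1-α)^ℓ')/q)) = 1 := by
        rw [Fintype.sum_equiv ((Equiv.mulRight₀ (u 0) hu0).trans (Equiv.subLeft c))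
          _ (fun y : ZMod q => if y = 0 then (1-α)^ℓ' + (1-(1-α)^ℓ')/q else (1-(1-α)^ℓ')/q)
          (fun x => by simp [Equiv.subLeft])]
        exact hGsum
      rw [hbij, if_neg hu0]
      simp only [zero_mul, sub_zero]
      rcases eq_or_ne c 0 with h | h
      · simp only [if_pos h]
        field_simp
        ring
      · simp only [if_neg h]
        field_simp
        ring

/-- **Inner product of a sparse Bernoulli vector with a fixed nonzero vector (`q`-ary case).**
Let `q` be prime, `qσ ≤ (q-1)n`, and set `α = qσ/((q-1)n)`.  Let `a ∼ (Ber_q(α))^n`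
(coordinates independent, each with `Pr[0] = (1-α) + α/q` and `Pr[x] = α/q` for `x ≠ 0`).
If `u ∈ F_qⁿ` is nonzero with `‖u‖₀ = ℓ`, then
`Pr[⟨a,u⟩ ≠ 0] = (1 - 1/q)·(1 - (1 - α)^ℓ) ≥ σ/n`. -/
theorem sparse_inner_product_q_ary
    (q n σ ℓ : ℕ) (hq : q.Prime) (hn : 0 < n) (hσ : 0 < σ)
    (hσn : q * σ ≤ (q - 1) * n)
    (α : ℝ) (hα : α = (q : ℝ) * σ / (((q : ℝ) - 1) * n))
    (μ : Measure (Fin n → ZMod q)) [IsProbabilityMeasure μ]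
    (hμ : ∀ a : Fin n → ZMod q,
      μ {a} = ∏ i, (if a i = 0 then ENNReal.ofReal ((1 - α) + α / q)
        else ENNReal.ofReal (α / q)))
    (u : Fin n → ZMod q) (hu : u ≠ 0) (hℓ : hammingNorm u = ℓ) :
    μ {a | (∑ i, a i * u i) ≠ 0} =
      ENNReal.ofReal ((1 - 1 / q) * (1 - (1 - α) ^ ℓ)) ∧
    (σ : ℝ) / n ≤ (1 - 1 / q) * (1 - (1 - α) ^ ℓ) := by
  haveI : Fact (Nat.Prime q) := ⟨hq⟩
  have hq2 : 2 ≤ q := hq.two_le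
  have hqR : (2:ℝ) ≤ q := by exact_mod_cast hq2
  have hq0 : (q:ℝ) ≠ 0 := by linarith
  have hnR : (0:ℝ) < n := by exact_mod_cast hn
  have hσR : (0:ℝ) < σ := by exact_mod_cast hσ
  have hq1 : (0:ℝ) < (q:ℝ) - 1 := by linarith
  have hσn' : (q:ℝ) * σ ≤ ((q:ℝ) - 1) * n := by
    have h1 : ((q - 1 : ℕ) : ℝ) = (q:ℝ) - 1 := by
      push_cast [Nat.cast_sub hq.one_le]; ring
    calc (q:ℝ) * σ = ((q * σ : ℕ) : ℝ) := by push_cast; ring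
      _ ≤ (((q-1) * n : ℕ) : ℝ) := by exact_mod_cast hσn
      _ = ((q:ℝ) - 1) * n := by push_cast [Nat.cast_sub hq.one_le]; ring
  have hαpos : 0 < α := by
    rw [hα]; positivity
  have hα1 : α ≤ 1 := by
    rw [hα, div_le_one (by positivity)]; exact hσn'
  have hw0 : 0 ≤ (1 - α) + α / q := by
    have : 0 ≤ α / q := by positivity
    linarith
  have hw1 : 0 ≤ α / (q:ℝ) := by positivity
  -- measure of the set as a finite sum
  have hset : {a : Fin n → ZMod q | (∑ i, a i * u i) ≠ 0}
      = ⋃ a ∈ Finset.univ.filter (fun a : Fin n → ZMod q => (∑ i, a i * u i) ≠ 0), {a} := by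
    ext a; simp
  have hμ' : ∀ a : Fin n → ZMod q,
      μ {a} = ENNReal.ofReal (∏ i, (if a i = 0 then (1 - α) + α / q else α / q)) := by
    intro a
    rw [hμ a, ENNReal.ofReal_prod_of_nonneg (fun i _ => by split <;> assumption)]
    exact Finset.prod_congr rfl fun i _ => by split <;> rfl
  have hmeas : μ {a : Fin n → ZMod q | (∑ i, a i * u i) ≠ 0}
      = ENNReal.ofReal (∑ a ∈ Finset.univ.filter
          (fun a : Fin n → ZMod q => (∑ i, a i * u i) ≠ 0),
          ∏ i, (if a i = 0 then (1 - α) + α / q else α / q)) := by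
    rw [hset, measure_biUnion_finset ?_ (fun b _ => measurableSet_singleton b)]
    · rw [ENNReal.ofReal_sum_of_nonneg
        (fun a _ => Finset.prod_nonneg fun i _ => by split <;> assumption)]
      exact Finset.sum_congr rfl fun a _ => hμ' a
    · intro a _ b _ hab
      simp only [Function.onFun, Set.disjoint_singleton]
      exact hab
  -- key real computation
  have hkey : (∑ a ∈ Finset.univ.filter
        (fun a : Fin n → ZMod q => (∑ i, a i * u i) ≠ 0),
        ∏ i, (if a i = 0 then (1 - α) + α / q else α / q))
      = (1 - 1 / q) * (1 - (1 - α) ^ ℓ) := by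
    rw [Finset.sum_filter]
    have hsplit : ∀ a : Fin n → ZMod q,
        (if (∑ i, a i * u i) ≠ 0 then
            ∏ i, (if a i = 0 then (1 - α) + α / q else α / q) else 0)
        = ∑ c ∈ Finset.univ.erase (0 : ZMod q),
            (if (∑ i, a i * u i) = c then
              ∏ i, (if a i = 0 then (1 - α) + α / q else α / q) else 0) := by
      intro a
      rw [Finset.sum_ite_eq]
      simp [Finset.mem_erase]
    simp only [hsplit]
    rw [Finset.sum_comm]
    have hterm : ∀ c ∈ Finset.univ.erase (0 : ZMod q),
        (∑ a : Fin n → ZMod q,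
          if (∑ i, a i * u i) = c then
            ∏ i, (if a i = 0 then (1 - α) + α / q else α / q) else 0)
        = (1 - (1-α)^ℓ)/q := by
      intro c hc
      rw [aux_sum q α n u c, if_neg (Finset.mem_erase.mp hc).1, hℓ]
    rw [Finset.sum_congr rfl hterm, Finset.sum_const, nsmul_eq_mul]
    have hcard : (Finset.univ.erase (0 : ZMod q)).card = q - 1 := by
      rw [Finset.card_erase_of_mem (Finset.mem_univ _), Finset.card_univ, ZMod.card]
    rw [hcard]
    have : ((q - 1 : ℕ) : ℝ) = (q:ℝ) - 1 := by
      push_cast [Nat.cast_sub hq.one_le]; ring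
    rw [this]
    field_simp
  constructor
  · rw [hmeas, hkey]
  · have hβ0 : (0:ℝ) ≤ 1 - α := by linarith
    have hℓ0 : ℓ ≠ 0 := by
      rw [← hℓ]
      simpa [hammingNorm_eq_zero] using hu
    have hpow : (1-α)^ℓ ≤ 1 - α := pow_le_of_le_one hβ0 (by linarith) hℓ0
    have h1 : α ≤ 1 - (1-α)^ℓ := by linarith
    have h2 : (0:ℝ) ≤ 1 - 1/q := by
      have : 1/(q:ℝ) ≤ 1/2 := by
        apply one_div_le_one_div_of_le <;> linarith
      linarith
    calc (σ:ℝ)/n = (1 - 1/q) * α := by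
          rw [hα]; field_simp
      _ ≤ (1 - 1/q) * (1 - (1-α)^ℓ) := mul_le_mul_of_nonneg_left h1 h2
end

section
/- Let X and Z be countable types, let μ be a probability distribution on X, let f : X → Z, and let k ≥ 1 be an integer. Let O be a randomized map taking a tuple y ∈ X^k to a random element of Z^k, and suppose that Pr[O(y)_i = f(y_i) for all i ∈ [k]] ≥ ε, where the probability is over y drawn from the k-fold product distribution μ^{×k} and the internal randomness of O. Let ε, δ, c ∈ [0,1] satisfy 2·exp(−k·c²·δ/8) ≤ c·ε. For x ∈ X, let p(x) denote the probability — over a uniformly random index i ∈ [k], independent samples x_j ∼ μ for all j ≠ i, and the internal randomness of O — that the i-th coordinate of O(x_1, …, x_{i−1}, x, x_{i+1}, …, x_k) equals f(x). Then Pr_{x ∼ μ}[p(x) ≥ (1 − c)·ε] ≥ 1 − δ. -/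
open MeasureTheory ProbabilityTheory
open scoped ENNReal

section Aux

variable {X : Type*} [Countable X] [MeasurableSpace X] [DiscreteMeasurableSpace X]

private lemma lmarginal_pull_const {k : ℕ} (μ : Measure X) [IsProbabilityMeasure μ]
    {s : Finset (Fin k)} {i : Fin k} (hi : i ∉ s) (g : X → ℝ≥0∞)
    (F : (Fin k → X) → ℝ≥0∞) (x : Fin k → X) :
    (∫⋯∫⁻_s, (fun y => g (y i) * F y) ∂(fun _ => μ)) x
      = g (x i) * (∫⋯∫⁻_s, F ∂(fun _ => μ)) x := by
  simp only [lmarginal]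
  rw [← lintegral_const_mul _ Measurable.of_discrete]
  congr 1
  funext yv
  congr 2
  simp [Function.updateFinset, hi]

private lemma lmarginal_prod_aux {k : ℕ} (μ : Measure X) [IsProbabilityMeasure μ]
    (g : X → ℝ≥0∞) (s : Finset (Fin k)) (x : Fin k → X) :
    (∫⋯∫⁻_s, (fun y => ∏ i ∈ s, g (y i)) ∂(fun _ => μ)) x = (∫⁻ t, g t ∂μ) ^ s.card := by
  induction s using Finset.induction generalizing x with
  | empty => simp
  | @insert i s hi ih =>
    have hF : (fun y : Fin k → X => ∏ j ∈ insert i s, g (y j))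
        = fun y => g (y i) * ∏ j ∈ s, g (y j) := by
      funext y; exact Finset.prod_insert hi
    rw [hF, lmarginal_insert _ Measurable.of_discrete hi x]
    have : ∀ xi : X, (∫⋯∫⁻_s, (fun y => g (y i) * ∏ j ∈ s, g (y j)) ∂(fun _ => μ))
        (Function.update x i xi) = g xi * (∫⁻ t, g t ∂μ) ^ s.card := by
      intro xi
      rw [lmarginal_pull_const μ hi, ih, Function.update_self]
    simp_rw [this]
    rw [lintegral_mul_const _ Measurable.of_discrete, Finset.card_insert_of_notMem hi,
      pow_succ]
    ring

private lemma lintegral_pi_prod {k : ℕ} (μ : Measure X) [IsProbabilityMeasure μ]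
    [Nonempty X] (g : X → ℝ≥0∞) :
    ∫⁻ y, ∏ i, g (y i) ∂(Measure.pi fun _ : Fin k => μ) = (∫⁻ t, g t ∂μ) ^ k := by
  rw [lintegral_eq_lmarginal_univ (fun _ => Classical.arbitrary X),
    lmarginal_prod_aux μ g Finset.univ, Finset.card_univ, Fintype.card_fin]

private lemma lintegral_pi_update {k : ℕ} (μ : Measure X) [IsProbabilityMeasure μ]
    [Nonempty X] (h : (Fin k → X) → ℝ≥0∞) (i : Fin k) :
    ∫⁻ y, h y ∂(Measure.pi fun _ : Fin k => μ) =
      ∫⁻ x, ∫⁻ y, h (Function.update y i x) ∂(Measure.pi fun _ : Fin k => μ) ∂μ := by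
  set x0 : Fin k → X := fun _ => Classical.arbitrary X with hx0
  have key : ∀ g : (Fin k → X) → ℝ≥0∞, (∀ y x, g (Function.update y i x) = g y) →
      ∫⁻ y, g y ∂(Measure.pi fun _ : Fin k => μ) =
        (∫⋯∫⁻_(Finset.univ.erase i), g ∂(fun _ => μ)) x0 := by
    intro g hg
    rw [lintegral_eq_lmarginal_univ x0,
      lmarginal_erase _ Measurable.of_discrete (Finset.mem_univ i) x0]
    have hconst : ∀ xi : X,
        (∫⋯∫⁻_(Finset.univ.erase i), g ∂(fun _ => μ)) (Function.update x0 i xi)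
          = (∫⋯∫⁻_(Finset.univ.erase i), g ∂(fun _ => μ)) x0 := by
      intro xi
      rw [lmarginal_update_of_notMem Measurable.of_discrete (Finset.notMem_erase i _)]
      have : g ∘ (Function.update · i xi) = g := funext fun y => hg y xi
      rw [this]
    simp_rw [hconst]
    simp
  rw [lintegral_eq_lmarginal_univ x0,
    lmarginal_erase _ Measurable.of_discrete (Finset.mem_univ i) x0]
  congr 1
  funext x
  rw [lmarginal_update_of_notMem Measurable.of_discrete (Finset.notMem_erase i _)]
  rw [key (fun y => h (Function.update y i x))
    (fun y x' => show h (Function.update (Function.update y i x') i x) = _ by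
      rw [Function.update_idem])]
  rfl

end Aux

set_option maxHeartbeats 1000000 in
/-- **Success amplification via the direct-product reduction (Hirahara–Shimizu).**
Let `(f, μ)` be a distributional problem on a countable domain `X` with solutions in a
countable type `Z`, and let `k ≥ 1`.  Let `O` be a randomized map taking tuples in `X^k`
to random tuples in `Z^k` (formalized as a family of probability measures) which solves
the `k`-wise direct product with probability at least `ε` over `y ∼ μ^{×k}` and the
internal randomness of `O`.  Suppose `ε, δ, c ∈ [0,1]` satisfy `2·exp(-k·c²·δ/8) ≤ c·ε`.
For `x ∈ X`, let `p(x)` be the probability — over a uniformly random coordinate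
`i ∈ [k]`, fresh samples from `μ` in the other coordinates, and the randomness of `O` —
that the `i`-th coordinate of the output of `O` on the tuple with `x` planted in
position `i` equals `f(x)`.  Then `Pr_{x∼μ}[p(x) ≥ (1-c)·ε] ≥ 1 - δ`. -/
theorem direct_product_reduction_amplification
    {X Z : Type*} [Countable X] [MeasurableSpace X] [DiscreteMeasurableSpace X]
    [Countable Z] [MeasurableSpace Z] [DiscreteMeasurableSpace Z]
    (μ : Measure X) [IsProbabilityMeasure μ]
    (f : X → Z) (k : ℕ) (hk : 1 ≤ k)
    (O : (Fin k → X) → Measure (Fin k → Z)) (hO : ∀ y, IsProbabilityMeasure (O y))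
    (ε δ c : ℝ) (hε : ε ∈ Set.Icc (0 : ℝ) 1) (hδ : δ ∈ Set.Icc (0 : ℝ) 1)
    (hc : c ∈ Set.Icc (0 : ℝ) 1)
    (hkc : 2 * Real.exp (-(k * c ^ 2 * δ) / 8) ≤ c * ε)
    (hsuccess : ENNReal.ofReal ε ≤
      ∫⁻ y, O y {z | ∀ i, z i = f (y i)} ∂(Measure.pi fun _ : Fin k => μ)) :
    1 - ENNReal.ofReal δ ≤
      μ {x | ENNReal.ofReal ((1 - c) * ε) ≤
        (k : ℝ≥0∞)⁻¹ * ∑ i : Fin k,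
          ∫⁻ y, O (Function.update y i x) {z | z i = f x}
            ∂(Measure.pi fun _ : Fin k => μ)} := by
  classical
  obtain ⟨hε0, hε1⟩ := hε
  obtain ⟨hδ0, hδ1⟩ := hδ
  obtain ⟨hc0, hc1⟩ := hc
  have hXne : Nonempty X := by
    rcases isEmpty_or_nonempty X with h | h
    · exfalso
      have h1 : μ Set.univ = 1 := measure_univ
      rw [Set.eq_empty_of_isEmpty (Set.univ : Set X), measure_empty] at h1
      simp at h1
    · exact h
  -- basic positivity facts
  have hk0 : (0 : ℝ) < k := by exact_mod_cast Nat.pos_of_ne_zero (by omega)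
  have hcε : 0 < c * ε := lt_of_lt_of_le (by positivity) hkc
  have hc0' : 0 < c := by nlinarith
  have hε0' : 0 < ε := by nlinarith
  have hδ0' : 0 < δ := by
    by_contra hcontra
    push_neg at hcontra
    have hδ0'' : δ = 0 := le_antisymm hcontra hδ0
    rw [hδ0''] at hkc
    simp at hkc
    nlinarith
  by_contra hcon
  push_neg at hcon
  -- notation
  set q : Fin k → X → ℝ≥0∞ := fun i x =>
    ∫⁻ y, O (Function.update y i x) {z | z i = f x}
      ∂(Measure.pi fun _ : Fin k => μ) with hq
  set p : X → ℝ≥0∞ := fun x => (k : ℝ≥0∞)⁻¹ * ∑ i : Fin k, q i x with hp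
  set G : Set X := {x | ENNReal.ofReal ((1 - c) * ε) ≤ p x} with hG
  have hcon2 : μ G < 1 - ENNReal.ofReal δ := hcon
  set B : Set X := Gᶜ with hB
  have hBmem : ∀ x, x ∈ B ↔ p x < ENNReal.ofReal ((1 - c) * ε) := by
    intro x
    simp [hB, hG, not_le]
  -- β
  have hμB : μ B = 1 - μ G := by
    rw [hB, measure_compl (MeasurableSet.of_discrete) (measure_ne_top μ G), measure_univ]
  set β : ℝ := (μ B).toReal with hβdef
  have hβfold : μ B = ENNReal.ofReal β := (ENNReal.ofReal_toReal (measure_ne_top μ B)).symm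
  have hGreal : (μ G).toReal < 1 - δ := by
    have hne : (1 : ℝ≥0∞) - ENNReal.ofReal δ ≠ ⊤ :=
      ne_top_of_le_ne_top ENNReal.one_ne_top tsub_le_self
    have h2 := (ENNReal.toReal_lt_toReal (measure_ne_top μ G) hne).2 hcon2
    have hdle : ENNReal.ofReal δ ≤ 1 := by
      rw [← ENNReal.ofReal_one]; exact ENNReal.ofReal_le_ofReal hδ1
    rwa [ENNReal.toReal_sub_of_le hdle ENNReal.one_ne_top, ENNReal.toReal_one,
      ENNReal.toReal_ofReal hδ0] at h2
  have hβeq : β = 1 - (μ G).toReal := by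
    rw [hβdef, hμB, ENNReal.toReal_sub_of_le prob_le_one ENNReal.one_ne_top, ENNReal.toReal_one]
  have hβδ : δ < β := by
    rw [hβeq]; linarith
  have hβ0 : 0 < β := lt_trans hδ0' hβδ
  have hβ1 : β ≤ 1 := by
    rw [hβeq]
    have := ENNReal.toReal_nonneg (a := μ G)
    linarith
  -- constants
  set r0 : ℝ := Real.exp (-(c / 2)) with hr0
  have hr0pos : 0 < r0 := Real.exp_pos _
  have hr0lt1 : r0 < 1 := by
    rw [hr0]
    apply Real.exp_lt_one_iff.2
    linarith
  set m : ℝ := (1 - c / 2) * (k * β) with hm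
  have hmpos : 0 < m := by
    rw [hm]
    apply mul_pos (by linarith) (by positivity)
  set ρ : ℝ := 1 - (1 - r0) * β with hρ
  have hρ0 : 0 ≤ ρ := by
    rw [hρ]; nlinarith
  -- the weight function and its integral
  set w : X → ℝ≥0∞ := fun x => if x ∈ B then ENNReal.ofReal r0 else 1 with hw
  have hw_int : ∫⁻ t, w t ∂μ = ENNReal.ofReal ρ := by
    have hsplitw : w = fun t =>
        B.indicator (fun _ => ENNReal.ofReal r0) t + Bᶜ.indicator (fun _ => (1 : ℝ≥0∞)) t := by
      funext t
      by_cases ht : t ∈ B <;> simp [hw, ht]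
    rw [hsplitw, lintegral_add_left Measurable.of_discrete,
      lintegral_indicator (MeasurableSet.of_discrete),
      lintegral_indicator (MeasurableSet.of_discrete),
      setLIntegral_const, setLIntegral_const]
    have hμBc : μ Bᶜ = ENNReal.ofReal (1 - β) := by
      rw [measure_compl (MeasurableSet.of_discrete) (measure_ne_top μ B), measure_univ, hβfold,
        ← ENNReal.ofReal_one, ← ENNReal.ofReal_sub _ (le_of_lt hβ0)]
    rw [hβfold, hμBc, one_mul, ← ENNReal.ofReal_mul (le_of_lt hr0pos),
      ← ENNReal.ofReal_add (by nlinarith) (by nlinarith)]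
    congr 1
    rw [hρ]; ring
  -- the event A
  set S : (Fin k → X) → ℝ≥0∞ := fun y => O y {z | ∀ i, z i = f (y i)} with hS
  set A : Set (Fin k → X) :=
    {y | ENNReal.ofReal (Real.exp (-(c / 2) * m)) ≤ ∏ i : Fin k, w (y i)} with hA
  -- Markov
  have hWint : ∫⁻ y, ∏ i : Fin k, w (y i) ∂(Measure.pi fun _ : Fin k => μ)
      = ENNReal.ofReal (ρ ^ k) := by
    rw [lintegral_pi_prod μ w, hw_int, ← ENNReal.ofReal_pow hρ0]
  have hmarkov : (Measure.pi fun _ : Fin k => μ) A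
      ≤ ENNReal.ofReal (ρ ^ k / Real.exp (-(c / 2) * m)) := by
    have h1 : ENNReal.ofReal (Real.exp (-(c / 2) * m)) * (Measure.pi fun _ : Fin k => μ) A
        ≤ ENNReal.ofReal (ρ ^ k) := by
      rw [← hWint, hA]
      exact mul_meas_ge_le_lintegral₀ Measurable.of_discrete.aemeasurable _
    rw [ENNReal.ofReal_div_of_pos (Real.exp_pos _)]
    rw [ENNReal.le_div_iff_mul_le
      (Or.inl ((ENNReal.ofReal_pos.2 (Real.exp_pos _)).ne'))
      (Or.inl ENNReal.ofReal_ne_top)]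
    rwa [mul_comm]
  -- on the complement, the number of bad coordinates is large
  have hNc : ∀ y : Fin k → X, y ∈ Aᶜ →
      ENNReal.ofReal m ≤ ((Finset.univ.filter fun i => y i ∈ B).card : ℝ≥0∞) := by
    intro y hy
    set n : ℕ := (Finset.univ.filter fun i => y i ∈ B).card with hn
    have hWy : ∏ i : Fin k, w (y i) = ENNReal.ofReal (Real.exp ((n : ℝ) * (-(c / 2)))) := by
      rw [Real.exp_nat_mul, ← hr0, ENNReal.ofReal_pow (le_of_lt hr0pos)]
      simp only [hw]
      rw [Finset.prod_ite, Finset.prod_const, Finset.prod_const_one, mul_one, hn]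
    have hylt : ∏ i : Fin k, w (y i) < ENNReal.ofReal (Real.exp (-(c / 2) * m)) := by
      simpa [hA, not_le] using hy
    rw [hWy] at hylt
    have h2 : Real.exp ((n : ℝ) * (-(c / 2))) < Real.exp (-(c / 2) * m) := by
      have := (ENNReal.ofReal_lt_ofReal_iff (Real.exp_pos _)).1 hylt
      exact this
    have h3 : (n : ℝ) * (-(c / 2)) < -(c / 2) * m := Real.exp_lt_exp.1 h2
    have h4 : m < (n : ℝ) := by nlinarith
    calc ENNReal.ofReal m ≤ ENNReal.ofReal (n : ℝ) := ENNReal.ofReal_le_ofReal (le_of_lt h4)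
    _ = (n : ℝ≥0∞) := ENNReal.ofReal_natCast n
  -- per-coordinate Fubini identity
  have key_i : ∀ i : Fin k,
      ∫⁻ y, (if y i ∈ B then (1 : ℝ≥0∞) else 0) * O y {z | z i = f (y i)}
        ∂(Measure.pi fun _ : Fin k => μ)
      = ∫⁻ x, (if x ∈ B then (1 : ℝ≥0∞) else 0) * q i x ∂μ := by
    intro i
    rw [lintegral_pi_update μ
      (fun y => (if y i ∈ B then (1 : ℝ≥0∞) else 0) * O y {z | z i = f (y i)}) i]
    congr 1
    funext x
    simp only [Function.update_self]
    rw [lintegral_const_mul _ Measurable.of_discrete, hq]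
  -- the weighted success bound
  have hNS : ∫⁻ y, ((Finset.univ.filter fun i => y i ∈ B).card : ℝ≥0∞) * S y
        ∂(Measure.pi fun _ : Fin k => μ)
      ≤ (k : ℝ≥0∞) * ENNReal.ofReal ((1 - c) * ε) * ENNReal.ofReal β := by
    have hpt : ∀ y : Fin k → X, ((Finset.univ.filter fun i => y i ∈ B).card : ℝ≥0∞) * S y
        ≤ ∑ i : Fin k, (if y i ∈ B then (1 : ℝ≥0∞) else 0) * O y {z | z i = f (y i)} := by
      intro y
      have hcard : ((Finset.univ.filter fun i => y i ∈ B).card : ℝ≥0∞)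
          = ∑ i : Fin k, (if y i ∈ B then (1 : ℝ≥0∞) else 0) := by
        rw [Finset.card_filter]
        push_cast
        rfl
      rw [hcard, Finset.sum_mul]
      apply Finset.sum_le_sum
      intro i _
      by_cases hyB : y i ∈ B
      · simp only [hyB, if_true, one_mul]
        exact measure_mono (fun z hz => hz i)
      · simp [hyB]
    calc ∫⁻ y, ((Finset.univ.filter fun i => y i ∈ B).card : ℝ≥0∞) * S y
          ∂(Measure.pi fun _ : Fin k => μ)
        ≤ ∫⁻ y, ∑ i : Fin k, (if y i ∈ B then (1 : ℝ≥0∞) else 0) * O y {z | z i = f (y i)}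
          ∂(Measure.pi fun _ : Fin k => μ) := lintegral_mono hpt
    _ = ∑ i : Fin k, ∫⁻ y, (if y i ∈ B then (1 : ℝ≥0∞) else 0) * O y {z | z i = f (y i)}
          ∂(Measure.pi fun _ : Fin k => μ) :=
        lintegral_finset_sum _ (fun i _ => Measurable.of_discrete)
    _ = ∑ i : Fin k, ∫⁻ x, (if x ∈ B then (1 : ℝ≥0∞) else 0) * q i x ∂μ :=
        Finset.sum_congr rfl fun i _ => key_i i
    _ = ∫⁻ x, ∑ i : Fin k, (if x ∈ B then (1 : ℝ≥0∞) else 0) * q i x ∂μ :=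
        (lintegral_finset_sum _ (fun i _ => Measurable.of_discrete)).symm
    _ = ∫⁻ x, (if x ∈ B then (1 : ℝ≥0∞) else 0) * ∑ i : Fin k, q i x ∂μ := by
        congr 1
        funext x
        rw [Finset.mul_sum]
    _ ≤ ∫⁻ x, (if x ∈ B then (1 : ℝ≥0∞) else 0) * ((k : ℝ≥0∞) * ENNReal.ofReal ((1 - c) * ε))
          ∂μ := by
        apply lintegral_mono
        intro x
        by_cases hxB : x ∈ B
        · simp only [hxB, if_true, one_mul]
          have hsum : ∑ i : Fin k, q i x = (k : ℝ≥0∞) * p x := by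
            rw [hp, ← mul_assoc, ENNReal.mul_inv_cancel
              (by exact_mod_cast Nat.cast_ne_zero.2 (by omega)) (ENNReal.natCast_ne_top k),
              one_mul]
          rw [hsum]
          exact mul_le_mul_right (le_of_lt ((hBmem x).1 hxB)) _
        · simp [hxB]
    _ = (k : ℝ≥0∞) * ENNReal.ofReal ((1 - c) * ε) * μ B := by
        have : (fun x => (if x ∈ B then (1 : ℝ≥0∞) else 0)
            * ((k : ℝ≥0∞) * ENNReal.ofReal ((1 - c) * ε)))
            = B.indicator (fun _ => (k : ℝ≥0∞) * ENNReal.ofReal ((1 - c) * ε)) := by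
          funext x
          by_cases hxB : x ∈ B <;> simp [hxB]
        rw [this, lintegral_indicator (MeasurableSet.of_discrete), setLIntegral_const]
    _ = (k : ℝ≥0∞) * ENNReal.ofReal ((1 - c) * ε) * ENNReal.ofReal β := by rw [hβfold]
  -- bound on the A part
  have hbound1 : ∫⁻ y in A, S y ∂(Measure.pi fun _ : Fin k => μ)
      ≤ ENNReal.ofReal (ρ ^ k / Real.exp (-(c / 2) * m)) := by
    refine le_trans ?_ hmarkov
    calc ∫⁻ y in A, S y ∂(Measure.pi fun _ : Fin k => μ)
        ≤ ∫⁻ _ in A, (1 : ℝ≥0∞) ∂(Measure.pi fun _ : Fin k => μ) := by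
          apply setLIntegral_mono measurable_const
          intro y _
          haveI := hO y
          exact prob_le_one
    _ = (Measure.pi fun _ : Fin k => μ) A := by rw [setLIntegral_const, one_mul]
  -- bound on the complement part
  have hbound2 : ∫⁻ y in Aᶜ, S y ∂(Measure.pi fun _ : Fin k => μ)
      ≤ ENNReal.ofReal ((1 - c) * ε / (1 - c / 2)) := by
    have hstep : ∫⁻ y in Aᶜ, S y ∂(Measure.pi fun _ : Fin k => μ)
        ≤ (ENNReal.ofReal m)⁻¹ *
          ((k : ℝ≥0∞) * ENNReal.ofReal ((1 - c) * ε) * ENNReal.ofReal β) := by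
      calc ∫⁻ y in Aᶜ, S y ∂(Measure.pi fun _ : Fin k => μ)
          ≤ ∫⁻ y in Aᶜ, (ENNReal.ofReal m)⁻¹ *
            (((Finset.univ.filter fun i => y i ∈ B).card : ℝ≥0∞) * S y)
            ∂(Measure.pi fun _ : Fin k => μ) := by
            apply setLIntegral_mono Measurable.of_discrete
            intro y hy
            calc S y = (ENNReal.ofReal m)⁻¹ * ENNReal.ofReal m * S y := by
                  rw [ENNReal.inv_mul_cancel (ENNReal.ofReal_pos.2 hmpos).ne'
                    ENNReal.ofReal_ne_top, one_mul]
            _ ≤ (ENNReal.ofReal m)⁻¹ *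
                ((Finset.univ.filter fun i => y i ∈ B).card : ℝ≥0∞) * S y := by
                gcongr
                exact hNc y hy
            _ = (ENNReal.ofReal m)⁻¹ *
                (((Finset.univ.filter fun i => y i ∈ B).card : ℝ≥0∞) * S y) := by
                rw [mul_assoc]
      _ = (ENNReal.ofReal m)⁻¹ * ∫⁻ y in Aᶜ,
            ((Finset.univ.filter fun i => y i ∈ B).card : ℝ≥0∞) * S y
            ∂(Measure.pi fun _ : Fin k => μ) :=
          lintegral_const_mul _ Measurable.of_discrete
      _ ≤ (ENNReal.ofReal m)⁻¹ * ∫⁻ y,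
            ((Finset.univ.filter fun i => y i ∈ B).card : ℝ≥0∞) * S y
            ∂(Measure.pi fun _ : Fin k => μ) := by
          gcongr
          exact Measure.restrict_le_self
      _ ≤ (ENNReal.ofReal m)⁻¹ *
            ((k : ℝ≥0∞) * ENNReal.ofReal ((1 - c) * ε) * ENNReal.ofReal β) := by
          gcongr
    refine hstep.trans ?_
    have h2 : (k : ℝ≥0∞) * ENNReal.ofReal ((1 - c) * ε) * ENNReal.ofReal β
        = ENNReal.ofReal ((k : ℝ) * ((1 - c) * ε) * β) := by
      rw [← ENNReal.ofReal_natCast k,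
        ← ENNReal.ofReal_mul (by positivity : (0:ℝ) ≤ (k : ℝ)),
        ← ENNReal.ofReal_mul
          (mul_nonneg (by positivity) (mul_nonneg (by linarith) hε0))]
    rw [h2, ← ENNReal.div_eq_inv_mul, ← ENNReal.ofReal_div_of_pos hmpos]
    have h12 : (0 : ℝ) < 1 - c / 2 := by linarith
    have heq : (k : ℝ) * ((1 - c) * ε) * β / m = (1 - c) * ε / (1 - c / 2) := by
      rw [hm]
      rw [div_eq_div_iff hmpos.ne' h12.ne']
      ring
    rw [heq]
  -- put it together
  have hsplit : ENNReal.ofReal ε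
      ≤ ∫⁻ y in A, S y ∂(Measure.pi fun _ : Fin k => μ)
        + ∫⁻ y in Aᶜ, S y ∂(Measure.pi fun _ : Fin k => μ) := by
    rw [lintegral_add_compl _ (MeasurableSet.of_discrete)]
    exact hsuccess
  have hfinal : ENNReal.ofReal ε
      ≤ ENNReal.ofReal (ρ ^ k / Real.exp (-(c / 2) * m) + (1 - c) * ε / (1 - c / 2)) := by
    rw [ENNReal.ofReal_add
      (div_nonneg (pow_nonneg hρ0 k) (Real.exp_pos _).le)
      (div_nonneg (mul_nonneg (by linarith) hε0) (by linarith))]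
    exact hsplit.trans (add_le_add hbound1 hbound2)
  have hreal : ε ≤ ρ ^ k / Real.exp (-(c / 2) * m) + (1 - c) * ε / (1 - c / 2) :=
    (ENNReal.ofReal_le_ofReal_iff
      (add_nonneg (div_nonneg (pow_nonneg hρ0 k) (Real.exp_pos _).le)
        (div_nonneg (mul_nonneg (by linarith) hε0) (by linarith)))).1 hfinal
  -- final real-number computation
  have hquad : r0 ≤ 1 - c / 2 + (c / 2) ^ 2 / 2 := by
    have h1 : 1 + c / 2 + (c / 2) ^ 2 / 2 ≤ Real.exp (c / 2) :=
      Real.quadratic_le_exp_of_nonneg (by linarith)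
    have h2 : r0 = (Real.exp (c / 2))⁻¹ := by
      rw [hr0, Real.exp_neg]
    have h3 : 0 < Real.exp (c / 2) := Real.exp_pos _
    have h4 : r0 * Real.exp (c / 2) = 1 := by
      rw [hr0, ← Real.exp_add]; simp
    have h5 : r0 * (1 + c / 2 + (c / 2) ^ 2 / 2) ≤ 1 := by
      nlinarith [mul_le_mul_of_nonneg_left h1 (le_of_lt hr0pos)]
    nlinarith [h5, hr0pos, hc0, sq_nonneg (c / 2), sq_nonneg ((c / 2) ^ 2)]
  have hterm1 : ρ ^ k / Real.exp (-(c / 2) * m) < c * ε / 2 := by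
    have e1 : ρ ≤ Real.exp (-((1 - r0) * β)) := by
      have := Real.add_one_le_exp (-((1 - r0) * β))
      rw [hρ]; linarith
    have e2 : ρ ^ k ≤ Real.exp (-((1 - r0) * β)) ^ k := pow_le_pow_left₀ hρ0 e1 k
    have e3 : Real.exp (-((1 - r0) * β)) ^ k = Real.exp ((k : ℝ) * -((1 - r0) * β)) :=
      (Real.exp_nat_mul _ k).symm
    have e4 : ρ ^ k / Real.exp (-(c / 2) * m)
        ≤ Real.exp ((k : ℝ) * -((1 - r0) * β) - -(c / 2) * m) := by
      rw [Real.exp_sub]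
      gcongr
      exact e2.trans (le_of_eq e3)
    have hkβ : 0 < (k : ℝ) * β := mul_pos hk0 hβ0
    have h1r0 : c / 2 - c ^ 2 / 8 ≤ 1 - r0 := by nlinarith [hquad]
    have hA := mul_le_mul_of_nonneg_left h1r0 (le_of_lt hkβ)
    have hBpos : 0 < (k : ℝ) * c ^ 2 * (β - δ) :=
      mul_pos (mul_pos hk0 (pow_pos hc0' 2)) (sub_pos.2 hβδ)
    have e5 : (k : ℝ) * -((1 - r0) * β) - -(c / 2) * m < -((k : ℝ) * c ^ 2 * δ) / 8 := by
      rw [hm]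
      nlinarith [hA, hBpos]
    calc ρ ^ k / Real.exp (-(c / 2) * m)
        ≤ Real.exp ((k : ℝ) * -((1 - r0) * β) - -(c / 2) * m) := e4
    _ < Real.exp (-((k : ℝ) * c ^ 2 * δ) / 8) := Real.exp_lt_exp.2 e5
    _ ≤ c * ε / 2 := by linarith [hkc]
  have h12 : (0 : ℝ) < 1 - c / 2 := by linarith
  set u : ℝ := (1 - c) * ε / (1 - c / 2) with hu
  have huc : u * (1 - c / 2) = (1 - c) * ε := div_mul_cancel₀ _ h12.ne'
  have hend : c * ε / 2 + u ≤ ε := by nlinarith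
  linarith
end

section
/- Let q be a prime, let n, m, k be positive integers, and let η ∈ [0,1]. Let (A_1, s_1, e_1), …, (A_k, s_k, e_k) be independent, where each A_i is uniform in F_q^{m×n}, each s_i is uniform in F_q^n, and each e_i is drawn from (Ber_q(η))^m. Set A* = [A_1 | A_2 | ⋯ | A_k] ∈ F_q^{m×kn} (horizontal concatenation), s* = (s_1, …, s_k) ∈ F_q^{kn}, e* = e_1 + ⋯ + e_k, and b* = Σ_{i=1}^k (A_i·s_i + e_i). Then b* = A*·s* + e*, and the triple (A*, s*, e*) is distributed as three independent components: A* uniform in F_q^{m×kn}, s* uniform in F_q^{kn}, and e* drawn from (Ber_q(1 − (1 − η)^k))^m. -/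
open MeasureTheory ProbabilityTheory
open scoped ENNReal

noncomputable instance matrixMeasurableSingletonClass (m n q : ℕ) :
    MeasurableSingletonClass (Matrix (Fin m) (Fin n) (ZMod q)) :=
  (inferInstance : MeasurableSingletonClass (Fin m → Fin n → ZMod q))

/-- Horizontal concatenation `A* = [A_1 | A_2 | ⋯ | A_k]` of the `k` challenge matrices,
with columns indexed by `Fin k × Fin n ≃ F_q^{kn}`. -/
def concatMatrix (q n m k : ℕ)
    (y : Fin k → Matrix (Fin m) (Fin n) (ZMod q) × (Fin n → ZMod q) × (Fin m → ZMod q)) :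
    Matrix (Fin m) (Fin k × Fin n) (ZMod q) :=
  Matrix.of fun r ji => (y ji.1).1 r ji.2

/-- Concatenated secret `s* = (s_1, …, s_k) ∈ F_q^{kn}`. -/
def concatSecret (q n m k : ℕ)
    (y : Fin k → Matrix (Fin m) (Fin n) (ZMod q) × (Fin n → ZMod q) × (Fin m → ZMod q)) :
    Fin k × Fin n → ZMod q :=
  fun ji => (y ji.1).2.1 ji.2

/-- Summed noise `e* = e_1 + ⋯ + e_k`. -/
def sumNoise (q n m k : ℕ)
    (y : Fin k → Matrix (Fin m) (Fin n) (ZMod q) × (Fin n → ZMod q) × (Fin m → ZMod q)) :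
    Fin m → ZMod q :=
  ∑ i, (y i).2.2

section LPNHelpers
open Finset

noncomputable def gBer (q : ℕ) (α : ℝ) (x : ZMod q) : ℝ :=
  (if x = 0 then 1 - α else 0) + α / q

lemma gBer_eq_ite (q : ℕ) (α : ℝ) (x : ZMod q) :
    gBer q α x = if x = 0 then (1 - α) + α / q else α / q := by
  unfold gBer; split <;> simp

lemma gBer_nonneg {q : ℕ} {α : ℝ} (h0 : 0 ≤ α) (h1 : α ≤ 1) (x : ZMod q) :
    0 ≤ gBer q α x := by
  have hq : (0:ℝ) ≤ (q:ℝ) := Nat.cast_nonneg q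
  have : (0:ℝ) ≤ α / q := div_nonneg h0 hq
  unfold gBer; split <;> nlinarith

lemma gBer_sum {q : ℕ} [NeZero q] (α : ℝ) : ∑ x : ZMod q, gBer q α x = 1 := by
  have hq : (q:ℝ) ≠ 0 := Nat.cast_ne_zero.mpr (NeZero.ne q)
  unfold gBer
  rw [Finset.sum_add_distrib, Finset.sum_ite_eq' Finset.univ (0 : ZMod q) (fun _ => (1 : ℝ) - α)]
  simp [ZMod.card q]
  field_simp
  ring

lemma gBer_conv {q : ℕ} [NeZero q] (α β : ℝ) (t : ZMod q) :
    ∑ a : ZMod q, gBer q α a * gBer q β (t - a) = gBer q (α + β - α * β) t := by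
  have hq : (q:ℝ) ≠ 0 := Nat.cast_ne_zero.mpr (NeZero.ne q)
  have h1 : ∑ a : ZMod q, gBer q β (t - a) = 1 := by
    rw [← gBer_sum (q := q) β]
    exact Fintype.sum_equiv (Equiv.subLeft t) _ _ (fun a => rfl)
  have expand : ∀ a : ZMod q, gBer q α a * gBer q β (t - a)
      = (if a = 0 then (1 - α) * gBer q β (t - a) else 0) + α / q * gBer q β (t - a) := by
    intro a
    unfold gBer
    split <;> ring
  rw [Finset.sum_congr rfl (fun a _ => expand a), Finset.sum_add_distrib,
    Finset.sum_ite_eq' Finset.univ (0 : ZMod q), ← Finset.mul_sum, h1]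
  simp only [mem_univ, if_true, sub_zero, mul_one]
  unfold gBer
  split <;> · field_simp; ring

noncomputable def hconv (q k : ℕ) [NeZero q] (α : ℝ) (t : ZMod q) : ℝ :=
  ∑ v : Fin k → ZMod q, if (∑ i, v i) = t then ∏ i, gBer q α (v i) else 0

lemma hconv_succ (q k : ℕ) [NeZero q] (α : ℝ) (t : ZMod q) :
    hconv q (k+1) α t = ∑ a : ZMod q, gBer q α a * hconv q k α (t - a) := by
  unfold hconv
  rw [← (Fin.consEquiv (fun _ : Fin (k+1) => ZMod q)).sum_comp]
  rw [Fintype.sum_prod_type]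
  refine Finset.sum_congr rfl fun a _ => ?_
  rw [Finset.mul_sum]
  refine Finset.sum_congr rfl fun w _ => ?_
  simp only [Fin.consEquiv_apply, Fin.sum_cons, Fin.prod_cons]
  rw [mul_ite, mul_zero]
  congr 1
  · simp [eq_sub_iff_add_eq']
  · simp [Fin.prod_univ_succ]

lemma hconv_eq {q : ℕ} [NeZero q] (k : ℕ) (α : ℝ) (t : ZMod q) :
    hconv q k α t = gBer q (1 - (1-α)^k) t := by
  induction k generalizing t with
  | zero =>
      unfold hconv gBer
      simp [Finset.sum_ite_eq', eq_comm]
  | succ k ih =>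
      rw [hconv_succ]
      simp_rw [ih]
      rw [gBer_conv]
      congr 1
      ring

def swapEquiv (k m : ℕ) (F : Type*) : (Fin k → Fin m → F) ≃ (Fin m → Fin k → F) :=
  ⟨Function.swap, Function.swap, fun _ => rfl, fun _ => rfl⟩

lemma sum_prod_gBer {q : ℕ} [NeZero q] (m k : ℕ) (α : ℝ) (e : Fin m → ZMod q) :
    ∑ ε : Fin k → Fin m → ZMod q,
      (if (∑ i, ε i) = e then ∏ i, ∏ r, gBer q α (ε i r) else 0)
      = ∏ r, gBer q (1 - (1-α)^k) (e r) := by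
  have key : ∀ r : Fin m, gBer q (1 - (1-α)^k) (e r) = hconv q k α (e r) :=
    fun r => (hconv_eq k α (e r)).symm
  simp_rw [key]
  unfold hconv
  rw [Finset.prod_univ_sum]
  rw [show (Fintype.piFinset fun _ : Fin m => (Finset.univ : Finset (Fin k → ZMod q)))
      = Finset.univ from Fintype.piFinset_univ]
  rw [← (swapEquiv k m (ZMod q)).sum_comp]
  refine Fintype.sum_congr _ _ fun ε => ?_
  simp only [swapEquiv, Equiv.coe_fn_mk, Function.swap]
  show (if (∑ i, ε i) = e then ∏ i, ∏ r, gBer q α (ε i r) else 0) =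
    ∏ i, if ∑ i_1, ε i_1 i = e i then ∏ i_1, gBer q α (ε i_1 i) else 0
  rw [Finset.prod_ite_zero]
  congr 1
  · simp only [eq_iff_iff]
    rw [funext_iff]
    constructor
    · intro h r _
      rw [← h r]
      simp [Finset.sum_apply]
    · intro h r
      rw [← h r (Finset.mem_univ r)]
      simp [Finset.sum_apply]
  · exact Finset.prod_comm

lemma ofReal_prod' {ι : Type*} (s : Finset ι) (f : ι → ℝ) (h : ∀ i ∈ s, 0 ≤ f i) :
    ENNReal.ofReal (∏ i ∈ s, f i) = ∏ i ∈ s, ENNReal.ofReal (f i) := by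
  induction s using Finset.cons_induction with
  | empty => simp
  | cons a s ha ih =>
      rw [Finset.prod_cons, Finset.prod_cons, ENNReal.ofReal_mul (h a (Finset.mem_cons_self a s)),
        ih (fun i hi => h i (Finset.mem_cons_of_mem hi))]

lemma measure_finset_eq_sum {α : Type*} [MeasurableSpace α] [MeasurableSingletonClass α]
    (μ : MeasureTheory.Measure α) (T : Finset α) :
    μ T = ∑ y ∈ T, μ {y} := by
  have h : (T : Set α) = ⋃ y ∈ T, {y} := by
    ext x; simp
  rw [h, MeasureTheory.measure_biUnion_finset]
  · intro b _ c _ hbc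
    simp only [Function.onFun, Set.disjoint_singleton]
    exact hbc
  · intro b _
    exact MeasurableSet.singleton b

end LPNHelpers

/-- **Product-to-single embedding for LPN over F_q.**
Let `q` be prime and let `(A_1, s_1, e_1), …, (A_k, s_k, e_k)` be independent with each
`A_i` uniform in `F_q^{m×n}`, each `s_i` uniform in `F_q^n`, and each `e_i ∼ (Ber_q(η))^m`
(this joint distribution is expressed by specifying all point masses).  Set
`A* = [A_1 | ⋯ | A_k]`, `s* = (s_1, …, s_k)`, `e* = e_1 + ⋯ + e_k` and
`b* = Σ_i (A_i·s_i + e_i)`.  Then `b* = A*·s* + e*` always holds, and `(A*, s*, e*)` is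
distributed as three independent components: `A*` uniform in `F_q^{m×kn}`, `s*` uniform
in `F_q^{kn}`, and `e* ∼ (Ber_q(1 - (1-η)^k))^m`. -/
theorem lpn_product_to_single_embedding
    (q n m k : ℕ) (hq : q.Prime) [NeZero q] (hn : 0 < n) (hm : 0 < m) (hk : 0 < k)
    (η : ℝ) (hη0 : 0 ≤ η) (hη1 : η ≤ 1)
    (μ : Measure (Fin k →
      Matrix (Fin m) (Fin n) (ZMod q) × (Fin n → ZMod q) × (Fin m → ZMod q)))
    [IsProbabilityMeasure μ]
    (hμ : ∀ y, μ {y} = ∏ i,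
      ((Fintype.card (Matrix (Fin m) (Fin n) (ZMod q)) : ℝ≥0∞)⁻¹ *
        ((Fintype.card (Fin n → ZMod q) : ℝ≥0∞)⁻¹ *
          ∏ r, (if (y i).2.2 r = 0 then ENNReal.ofReal ((1 - η) + η / q)
            else ENNReal.ofReal (η / q))))) :
    (∀ y, (∑ i, ((y i).1.mulVec ((y i).2.1) + (y i).2.2)) =
        (concatMatrix q n m k y).mulVec (concatSecret q n m k y) + sumNoise q n m k y) ∧
    (∀ (A : Matrix (Fin m) (Fin k × Fin n) (ZMod q)) (s : Fin k × Fin n → ZMod q)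
        (e : Fin m → ZMod q),
      μ {y | concatMatrix q n m k y = A ∧ concatSecret q n m k y = s ∧
          sumNoise q n m k y = e} =
        (Fintype.card (Matrix (Fin m) (Fin k × Fin n) (ZMod q)) : ℝ≥0∞)⁻¹ *
        ((Fintype.card (Fin k × Fin n → ZMod q) : ℝ≥0∞)⁻¹ *
          ∏ r, (if e r = 0
            then ENNReal.ofReal ((1 - (1 - (1 - η) ^ k)) + (1 - (1 - η) ^ k) / q)
            else ENNReal.ofReal ((1 - (1 - η) ^ k) / q)))) := by
  classical
  constructor
  · intro y
    funext r
    simp only [Pi.add_apply, Finset.sum_apply, Matrix.mulVec, dotProduct,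
      concatMatrix, concatSecret, sumNoise, Matrix.of_apply]
    rw [Fintype.sum_prod_type, ← Finset.sum_add_distrib]
  · intro A s e
    set Φ : (Fin k → Fin m → ZMod q) →
        (Fin k → Matrix (Fin m) (Fin n) (ZMod q) × (Fin n → ZMod q) × (Fin m → ZMod q)) :=
      fun ε i => (Matrix.of fun r c => A r (i, c), fun c => s (i, c), ε i) with hΦ
    have hΦinj : Function.Injective Φ := by
      intro ε ε' h
      funext i r
      exact congrFun (congrArg (fun p => p.2.2) (congrFun h i)) r
    have hset : {y | concatMatrix q n m k y = A ∧ concatSecret q n m k y = s ∧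
        sumNoise q n m k y = e}
        = (((Finset.univ.filter
            (fun ε : Fin k → Fin m → ZMod q => (∑ i, ε i) = e)).image Φ : Finset _) : Set _) := by
      ext y
      simp only [Set.mem_setOf_eq, Finset.coe_image, Set.mem_image, Finset.mem_coe,
        Finset.mem_filter, Finset.mem_univ, true_and]
      constructor
      · rintro ⟨hA, hs, he⟩
        refine ⟨fun i => (y i).2.2, he, ?_⟩
        funext i
        have h1 : (Matrix.of fun r c => A r (i, c)) = (y i).1 := by
          ext r c
          exact (congrFun (congrFun hA r) (i, c)).symm
        have h2 : (fun c => s (i, c)) = (y i).2.1 := by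
          funext c
          exact (congrFun hs (i, c)).symm
        exact Prod.ext h1 (Prod.ext h2 rfl)
      · rintro ⟨ε, hε, rfl⟩
        refine ⟨rfl, rfl, ?_⟩
        simpa [sumNoise, hΦ] using hε
    rw [hset, measure_finset_eq_sum, Finset.sum_image (fun a _ b _ h => hΦinj h)]
    have hμΦ : ∀ ε : Fin k → Fin m → ZMod q, μ {Φ ε} =
        (Fintype.card (Matrix (Fin m) (Fin n) (ZMod q)) : ℝ≥0∞)⁻¹ ^ k *
        ((Fintype.card (Fin n → ZMod q) : ℝ≥0∞)⁻¹ ^ k *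
          ENNReal.ofReal (∏ i, ∏ r, gBer q η (ε i r))) := by
      intro ε
      rw [hμ]
      have hB : ∀ x : ZMod q,
          (if x = 0 then ENNReal.ofReal ((1 - η) + η / q) else ENNReal.ofReal (η / q))
          = ENNReal.ofReal (gBer q η x) := by
        intro x
        rw [gBer_eq_ite]
        split <;> rfl
      simp only [hΦ]
      simp only [hB]
      rw [Finset.prod_mul_distrib, Finset.prod_mul_distrib, Finset.prod_const,
        Finset.prod_const, Finset.card_univ, Fintype.card_fin]
      congr 1
      congr 1
      rw [ofReal_prod' _ _ (fun i _ => Finset.prod_nonneg fun r _ => gBer_nonneg hη0 hη1 _)]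
      exact Finset.prod_congr rfl fun i _ =>
        (ofReal_prod' _ _ (fun r _ => gBer_nonneg hη0 hη1 _)).symm
    simp only [hμΦ]
    rw [← Finset.mul_sum, ← Finset.mul_sum]
    have hsum : ∑ ε ∈ Finset.univ.filter (fun ε : Fin k → Fin m → ZMod q => (∑ i, ε i) = e),
        ENNReal.ofReal (∏ i, ∏ r, gBer q η (ε i r))
        = ∏ r, (if e r = 0
            then ENNReal.ofReal ((1 - (1 - (1 - η) ^ k)) + (1 - (1 - η) ^ k) / q)
            else ENNReal.ofReal ((1 - (1 - η) ^ k) / q)) := by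
      rw [Finset.sum_filter]
      have : ∀ ε : Fin k → Fin m → ZMod q,
          (if (∑ i, ε i) = e then ENNReal.ofReal (∏ i, ∏ r, gBer q η (ε i r)) else 0)
          = ENNReal.ofReal (if (∑ i, ε i) = e then ∏ i, ∏ r, gBer q η (ε i r) else 0) := by
        intro ε
        split <;> simp
      simp only [this]
      rw [← ENNReal.ofReal_sum_of_nonneg (fun ε _ => by
        split
        · exact Finset.prod_nonneg fun i _ => Finset.prod_nonneg fun r _ =>
            gBer_nonneg hη0 hη1 _
        · exact le_refl 0)]
      rw [sum_prod_gBer m k η e]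
      have hη'0 : (0:ℝ) ≤ 1 - (1 - η)^k := by
        have h1 : (1 - η)^k ≤ 1 := pow_le_one₀ (by linarith) (by linarith)
        linarith
      have hη'1 : 1 - (1 - η)^k ≤ 1 := by
        have : (0:ℝ) ≤ (1 - η)^k := pow_nonneg (by linarith) k
        linarith
      rw [ofReal_prod' _ _ (fun r _ => gBer_nonneg hη'0 hη'1 _)]
      refine Finset.prod_congr rfl fun r _ => ?_
      rw [gBer_eq_ite]
      split <;> rfl
    rw [hsum]
    have hcM : ((Fintype.card (Matrix (Fin m) (Fin n) (ZMod q)) : ℝ≥0∞))⁻¹ ^ k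
        = (Fintype.card (Matrix (Fin m) (Fin k × Fin n) (ZMod q)) : ℝ≥0∞)⁻¹ := by
      rw [← ENNReal.inv_pow, ← Nat.cast_pow]
      congr 2
      have eM1 : Matrix (Fin m) (Fin n) (ZMod q) ≃ (Fin m → Fin n → ZMod q) :=
        ⟨fun M => M, fun f => f, fun _ => rfl, fun _ => rfl⟩
      have eM2 : Matrix (Fin m) (Fin k × Fin n) (ZMod q) ≃ (Fin m → Fin k × Fin n → ZMod q) :=
        ⟨fun M => M, fun f => f, fun _ => rfl, fun _ => rfl⟩
      rw [Fintype.card_congr eM1, Fintype.card_congr eM2]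
      simp only [Fintype.card_fun, ZMod.card, Fintype.card_fin, Fintype.card_prod,
        ← pow_mul]
      congr 1
      ring
    have hcS : ((Fintype.card (Fin n → ZMod q) : ℝ≥0∞))⁻¹ ^ k
        = (Fintype.card (Fin k × Fin n → ZMod q) : ℝ≥0∞)⁻¹ := by
      rw [← ENNReal.inv_pow, ← Nat.cast_pow]
      congr 2
      simp only [Fintype.card_fun, ZMod.card, Fintype.card_fin, Fintype.card_prod]
      rw [← pow_mul]
      congr 1
      ring
    rw [hcM, hcS]
end

section
/- For all integers n and σ with 1 ≤ σ ≤ n − 1, the binomial probability satisfies C(n, σ)·(σ/n)^σ·(1 − σ/n)^{n−σ} ≥ 1/√(8σ). In particular, if the Hamming weight of a random vector is distributed as Binomial(n, σ/n), then the probability that the weight equals exactly σ is at least 1/√(8σ). -/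
open scoped ENNReal

open Stirling Real

lemma sqrtpi_le_stirlingSeq (k : ℕ) (hk : 1 ≤ k) : Real.sqrt Real.pi ≤ stirlingSeq k := by
  obtain ⟨m, rfl⟩ := Nat.exists_eq_add_of_le hk
  have h := stirlingSeq'_antitone.le_of_tendsto
    (tendsto_stirlingSeq_sqrt_pi.comp (Filter.tendsto_add_atTop_nat 1)) m
  simpa [Nat.add_comm] using h

lemma stirlingSeq_pos' (k : ℕ) (hk : 1 ≤ k) : 0 < stirlingSeq k := by
  have : (0:ℝ) < k := by exact_mod_cast hk
  unfold stirlingSeq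
  have := Nat.factorial_pos k
  positivity

lemma stirlingSeq_two : stirlingSeq 2 = Real.exp 1 ^ 2 / 4 := by
  have he := Real.exp_ne_zero 1
  rw [stirlingSeq]
  rw [show (2*((2:ℕ):ℝ)) = 2^2 by norm_num, Real.sqrt_sq (by norm_num)]
  rw [Nat.factorial]
  field_simp
  ring

lemma stirlingSeq_le_two (k : ℕ) (hk : 2 ≤ k) : stirlingSeq k ≤ Real.exp 1 ^ 2 / 4 := by
  obtain ⟨m, rfl⟩ := Nat.exists_eq_add_of_le hk
  have h := stirlingSeq'_antitone (a := 1) (b := m + 1) (by omega)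
  simp only [Function.comp] at h
  rw [← stirlingSeq_two]
  rw [show 2 + m = (m+1).succ by omega]; exact h

lemma fact_eq (k : ℕ) (hk : 1 ≤ k) :
    (Nat.factorial k : ℝ) = stirlingSeq k * (Real.sqrt (2*k) * ((k:ℝ) / Real.exp 1)^k) := by
  have h0 : (0:ℝ) < k := by exact_mod_cast hk
  have h : Real.sqrt (2*k) * ((k:ℝ)/Real.exp 1)^k ≠ 0 := by positivity
  rw [stirlingSeq, div_mul_cancel₀ _ h]

lemma main_eq (σ m : ℕ) (hσ : 1 ≤ σ) (hm : 1 ≤ m) :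
    (((σ+m).choose σ : ℕ) : ℝ) * ((σ:ℝ)/((σ:ℝ)+(m:ℝ)))^σ * ((m:ℝ)/((σ:ℝ)+(m:ℝ)))^m
      = stirlingSeq (σ+m) / (stirlingSeq σ * stirlingSeq m)
        * (Real.sqrt (2*((σ:ℝ)+(m:ℝ))) / (Real.sqrt (2*(σ:ℝ)) * Real.sqrt (2*(m:ℝ)))) := by
  have hσ0 : (0:ℝ) < σ := by exact_mod_cast hσ
  have hm0 : (0:ℝ) < m := by exact_mod_cast hm
  have hN0 : (0:ℝ) < (σ:ℝ)+(m:ℝ) := by linarith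
  have haσ := stirlingSeq_pos' σ hσ
  have ham := stirlingSeq_pos' m hm
  have haN := stirlingSeq_pos' (σ+m) (by omega)
  have hsσ : 0 < Real.sqrt (2*(σ:ℝ)) := Real.sqrt_pos.mpr (by linarith)
  have hsm : 0 < Real.sqrt (2*(m:ℝ)) := Real.sqrt_pos.mpr (by linarith)
  have hsN : 0 < Real.sqrt (2*((σ:ℝ)+(m:ℝ))) := Real.sqrt_pos.mpr (by linarith)
  have he : 0 < Real.exp 1 := Real.exp_pos 1
  have hc : (((σ+m).choose σ : ℕ) : ℝ)
      = (Nat.factorial (σ+m) : ℝ) / ((Nat.factorial σ : ℝ) * (Nat.factorial m : ℝ)) := by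
    rw [Nat.cast_choose ℝ (Nat.le_add_right σ m)]
    simp
  rw [hc, fact_eq (σ+m) (by omega), fact_eq σ hσ, fact_eq m hm]
  push_cast
  rw [div_pow, div_pow, div_pow, div_pow, div_pow]
  rw [pow_add ((σ:ℝ)+(m:ℝ)) σ m, pow_add (Real.exp 1) σ m]
  field_simp

lemma sqrt8_eq (σ : ℕ) : Real.sqrt (8*(σ:ℝ)) = 2 * Real.sqrt (2*(σ:ℝ)) := by
  rw [show (8:ℝ)*(σ:ℝ) = 2^2*(2*(σ:ℝ)) by ring, Real.sqrt_mul (by positivity),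
    Real.sqrt_sq (by norm_num)]

lemma exp_sq_le : Real.exp 1 ^ 2 ≤ 7.389057 := by
  nlinarith [Real.exp_one_lt_d9, Real.exp_pos 1]

lemma sqrtpi_ge : (1.77245 : ℝ) ≤ Real.sqrt Real.pi := by
  rw [show (1.77245:ℝ) = Real.sqrt (1.77245^2) from (Real.sqrt_sq (by norm_num)).symm]
  apply Real.sqrt_le_sqrt
  nlinarith [Real.pi_gt_d6]

lemma pow_ratio_ge (k : ℕ) (hk : 1 ≤ k) :
    (Real.exp 1)⁻¹ ≤ (((k:ℝ))/((k:ℝ)+1))^k := by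
  have hk0 : (0:ℝ) < k := by exact_mod_cast hk
  have h1 : ((k:ℝ)+1)/(k:ℝ) ≤ Real.exp (1/(k:ℝ)) := by
    have := Real.add_one_le_exp (1/(k:ℝ))
    have : 1 + 1/(k:ℝ) ≤ Real.exp (1/(k:ℝ)) := by linarith
    calc ((k:ℝ)+1)/(k:ℝ) = 1 + 1/(k:ℝ) := by field_simp
      _ ≤ _ := this
  have h2 : (((k:ℝ)+1)/(k:ℝ))^k ≤ Real.exp 1 := by
    calc (((k:ℝ)+1)/(k:ℝ))^k ≤ (Real.exp (1/(k:ℝ)))^k := by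
          apply pow_le_pow_left₀ (by positivity) h1
      _ = Real.exp ((k:ℝ) * (1/(k:ℝ))) := by rw [← Real.exp_nat_mul]
      _ = Real.exp 1 := by rw [mul_one_div, div_self (ne_of_gt hk0)]
  have h3 : (((k:ℝ))/((k:ℝ)+1))^k = ((((k:ℝ)+1)/(k:ℝ))^k)⁻¹ := by
    rw [← inv_pow]
    congr 1
    field_simp
  rw [h3]
  exact inv_anti₀ (by positivity) h2

lemma main_bound (σ m : ℕ) (hσ : 2 ≤ σ) (hm : 2 ≤ m) :
    1 / Real.sqrt (8*(σ:ℝ)) ≤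
      (((σ+m).choose σ : ℕ) : ℝ) * ((σ:ℝ)/((σ:ℝ)+(m:ℝ)))^σ * ((m:ℝ)/((σ:ℝ)+(m:ℝ)))^m := by
  rw [main_eq σ m (by omega) (by omega), sqrt8_eq]
  have hσ0 : (0:ℝ) < σ := by exact_mod_cast (by omega : 0 < σ)
  have hm0 : (0:ℝ) < m := by exact_mod_cast (by omega : 0 < m)
  set aN := stirlingSeq (σ+m) with haNd
  set aσ := stirlingSeq σ with haσd
  set am := stirlingSeq m with hamd
  have haN : (1.77245:ℝ) ≤ aN := le_trans sqrtpi_ge (sqrtpi_le_stirlingSeq _ (by omega))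
  have haσp : 0 < aσ := stirlingSeq_pos' σ (by omega)
  have hamp : 0 < am := stirlingSeq_pos' m (by omega)
  have hub : Real.exp 1 ^ 2 / 4 ≤ 1.84727 := by linarith [exp_sq_le]
  have haσu : aσ ≤ 1.84727 := le_trans (stirlingSeq_le_two σ hσ) hub
  have hamu : am ≤ 1.84727 := le_trans (stirlingSeq_le_two m hm) hub
  set sσ := Real.sqrt (2*(σ:ℝ)) with hsσd
  set sm := Real.sqrt (2*(m:ℝ)) with hsmd
  set sN := Real.sqrt (2*((σ:ℝ)+(m:ℝ))) with hsNd
  have hsσ : 0 < sσ := Real.sqrt_pos.mpr (by linarith)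
  have hsm : 0 < sm := Real.sqrt_pos.mpr (by linarith)
  have hsmN : sm ≤ sN := Real.sqrt_le_sqrt (by linarith)
  have hsN : 0 < sN := lt_of_lt_of_le hsm hsmN
  rw [div_mul_div_comm, show (1:ℝ)/(2*sσ) = 1/(2*sσ) from rfl,
    div_le_div_iff₀ (by positivity) (by positivity), one_mul]
  nlinarith [mul_nonneg (sub_nonneg.2 haσu) (sub_nonneg.2 hamu),
    mul_pos hsσ hsm, mul_pos hsN hsσ,
    mul_nonneg (sub_nonneg.2 haN) (mul_pos hsN hsσ).le,
    mul_nonneg (mul_nonneg (by norm_num : (0:ℝ) ≤ 1.77245) (sub_nonneg.2 hsmN)) hsσ.le,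
    mul_nonneg (mul_nonneg (sub_nonneg.2 haσu) hamp.le) (mul_pos hsσ hsm).le,
    mul_nonneg (mul_nonneg (sub_nonneg.2 hamu) (by norm_num : (0:ℝ) ≤ 1.84727)) (mul_pos hsσ hsm).le]

lemma sqrt8_ge : Real.exp 1 ≤ Real.sqrt 8 := by
  have h1 : (2.8:ℝ) ≤ Real.sqrt 8 := by
    rw [show (2.8:ℝ) = Real.sqrt (2.8^2) from (Real.sqrt_sq (by norm_num)).symm]
    exact Real.sqrt_le_sqrt (by norm_num)
  linarith [Real.exp_one_lt_d9]

lemma small_bound (k : ℕ) (hk : 1 ≤ k) :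
    1 / Real.sqrt 8 ≤ (((k:ℝ))/((k:ℝ)+1))^k := by
  refine le_trans ?_ (pow_ratio_ge k hk)
  rw [one_div]
  exact inv_anti₀ (Real.exp_pos 1) sqrt8_ge

lemma sqrt8σ_le (σ : ℕ) (hσ : 1 ≤ σ) : 1 / Real.sqrt (8*(σ:ℝ)) ≤ 1 / Real.sqrt 8 := by
  have hσ0 : (1:ℝ) ≤ σ := by exact_mod_cast hσ
  apply one_div_le_one_div_of_le (Real.sqrt_pos.mpr (by norm_num))
  exact Real.sqrt_le_sqrt (by nlinarith)

lemma part1 (n σ : ℕ) (h1 : 1 ≤ σ) (h2 : σ ≤ n - 1) :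
    1 / Real.sqrt (8 * σ) ≤
      (n.choose σ : ℝ) * ((σ : ℝ) / n) ^ σ * (1 - (σ : ℝ) / n) ^ (n - σ) := by
  obtain ⟨m, rfl⟩ : ∃ m, n = σ + m := ⟨n - σ, by omega⟩
  have hm : 1 ≤ m := by omega
  have hσ0 : (0:ℝ) < σ := by exact_mod_cast h1
  have hm0 : (0:ℝ) < m := by exact_mod_cast hm
  have hN0 : (0:ℝ) < (σ:ℝ)+(m:ℝ) := by linarith
  have hsub : σ + m - σ = m := by omega
  have hcast : ((σ + m : ℕ) : ℝ) = (σ:ℝ)+(m:ℝ) := by push_cast; ring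
  have hone : 1 - (σ : ℝ) / ((σ + m : ℕ) : ℝ) = (m:ℝ)/((σ:ℝ)+(m:ℝ)) := by
    rw [hcast]; field_simp; ring
  rw [hsub, hone, hcast]
  rcases Nat.lt_or_ge σ 2 with hσ2 | hσ2
  · -- σ = 1
    have hσ1 : σ = 1 := by omega
    subst hσ1
    have hch : ((1+m).choose 1 : ℝ) = (1:ℝ)+(m:ℝ) := by
      rw [Nat.choose_one_right]; push_cast; ring
    have key : ((1+m).choose 1 : ℝ) * ((1:ℝ)/((1:ℝ)+(m:ℝ)))^1 * ((m:ℝ)/((1:ℝ)+(m:ℝ)))^m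
        = ((m:ℝ)/((m:ℝ)+1))^m := by
      rw [hch]; field_simp; ring_nf
    push_cast
    rw [key]
    refine le_trans ?_ (small_bound m hm)
    norm_num
  rcases Nat.lt_or_ge m 2 with hm2 | hm2
  · -- m = 1
    have hm1 : m = 1 := by omega
    subst hm1
    have hch : ((σ+1).choose σ : ℝ) = (σ:ℝ)+1 := by
      rw [Nat.choose_succ_self_right]; push_cast; ring
    have key : ((σ+1).choose σ : ℝ) * ((σ:ℝ)/((σ:ℝ)+1))^σ * ((1:ℝ)/((σ:ℝ)+1))^1
        = ((σ:ℝ)/((σ:ℝ)+1))^σ := by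
      rw [hch]; field_simp
    push_cast
    rw [key]
    exact le_trans (sqrt8σ_le σ h1) (small_bound σ h1)
  · exact main_bound σ m hσ2 hm2

/-- **Lower bound on the central binomial probability.**
For all integers `1 ≤ σ ≤ n - 1`, `C(n,σ)·(σ/n)^σ·(1 - σ/n)^{n-σ} ≥ 1/√(8σ)`.
In particular, if the Hamming weight of a random vector is distributed as
`Binomial(n, σ/n)`, the probability that the weight equals exactly `σ` is at least
`1/√(8σ)`. -/
theorem binomial_prob_exact_weight (n σ : ℕ) (h1 : 1 ≤ σ) (h2 : σ ≤ n - 1) :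
    1 / Real.sqrt (8 * σ) ≤
      (n.choose σ : ℝ) * ((σ : ℝ) / n) ^ σ * (1 - (σ : ℝ) / n) ^ (n - σ) ∧
    ∀ (p : ℝ≥0∞) (hp : p ≤ 1), p = ENNReal.ofReal ((σ : ℝ) / n) →
      ENNReal.ofReal (1 / Real.sqrt (8 * σ)) ≤
        PMF.binomial p.toNNReal (by simpa using ENNReal.toNNReal_mono ENNReal.one_ne_top hp) n ⟨σ, by omega⟩ := by
  have hp1 := part1 n σ h1 h2
  refine ⟨hp1, ?_⟩
  intro p hp hpe
  subst hpe
  have hn0 : (0:ℝ) < n := by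
    have : 2 ≤ n := by omega
    exact_mod_cast Nat.lt_of_lt_of_le Nat.zero_lt_two this
  have hd0 : (0:ℝ) ≤ (σ:ℝ)/n := by positivity
  have hd1 : (σ:ℝ)/n ≤ 1 := by
    rw [div_le_one hn0]
    exact_mod_cast Nat.le_of_lt (by omega)
  have hq0 : (0:ℝ) ≤ 1 - (σ:ℝ)/n := by linarith
  erw [PMF.binomial_apply]
  rw [ENNReal.coe_toNNReal ENNReal.ofReal_ne_top]
  have hfin1 : (((⟨σ, by omega⟩ : Fin (n+1)) : ℕ)) = σ := rfl
  rw [hfin1, Fin.val_last]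
  have hsub : 1 - ENNReal.ofReal ((σ:ℝ)/n) = ENNReal.ofReal (1 - (σ:ℝ)/n) := by
    rw [ENNReal.ofReal_sub 1 hd0, ENNReal.ofReal_one]
  rw [hsub, ← ENNReal.ofReal_pow hd0, ← ENNReal.ofReal_pow hq0,
    ← ENNReal.ofReal_natCast (n.choose σ), ← ENNReal.ofReal_mul (by positivity),
    ← ENNReal.ofReal_mul (by positivity)]
  apply ENNReal.ofReal_le_ofReal
  calc 1 / Real.sqrt (8 * σ)
      ≤ (n.choose σ : ℝ) * ((σ : ℝ) / n) ^ σ * (1 - (σ : ℝ) / n) ^ (n - σ) := hp1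
    _ = ((σ:ℝ)/n) ^ σ * (1 - (σ:ℝ)/n) ^ (n - σ) * (n.choose σ : ℝ) := by ring
end

section
/- Let n, m, σ be positive integers with σ ≤ n and let η ∈ [0,1]. Fix vectors s, v ∈ F_2^n. Sample A from (Ber(σ/n))^{m×n} (all entries independent) and e from (Ber(η))^m, independently. Then the expected Hamming distance satisfies E[‖(A·s + e) − A·v‖_0] = m·(η + (1 − 2η)·p), where p = Pr_{a ∼ (Ber(σ/n))^n}[⟨a, s + v⟩ ≠ 0]. In particular, when v = s this expectation equals η·m. -/
open MeasureTheory ProbabilityTheory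
open scoped ENNReal

instance matrixMSC (m n q : ℕ) :
    MeasurableSingletonClass (Matrix (Fin m) (Fin n) (ZMod q)) :=
  (inferInstance : MeasurableSingletonClass (Fin m → Fin n → ZMod q))

lemma zmod2_sum {M : Type*} [AddCommMonoid M] (f : ZMod 2 → M) :
    ∑ b, f b = f 0 + f 1 := by
  rw [show (Finset.univ : Finset (ZMod 2)) = {0, 1} from by decide]
  rw [Finset.sum_pair (by decide : (0 : ZMod 2) ≠ 1)]

lemma key_sum {Z : Type*} [Fintype Z] (m : ℕ) (W g : Z → ℝ) (hW : ∑ z, W z = 1) :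
    ∑ F : Fin m → Z, (∑ r, g (F r)) * ∏ r, W (F r) = m * ∑ z, g z * W z := by
  have step : ∀ r : Fin m, ∑ F : Fin m → Z,
      (∏ r' : Fin m, if r' = r then g (F r') * W (F r') else W (F r')) = ∑ z, g z * W z := by
    intro r
    have := (Finset.prod_univ_sum (fun _ : Fin m => (Finset.univ : Finset Z))
      (fun r' z => if r' = r then g z * W z else W z))
    rw [Fintype.piFinset_univ] at this
    rw [← this]
    have : ∀ r' : Fin m, (∑ z, if r' = r then g z * W z else W z) =
        if r' = r then ∑ z, g z * W z else 1 := by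
      intro r'; by_cases h : r' = r <;> simp [h, hW]
    rw [Finset.prod_congr rfl fun r' _ => this r', Finset.prod_ite_eq' Finset.univ r
      (fun _ => ∑ z, g z * W z)]
    simp
  calc ∑ F : Fin m → Z, (∑ r, g (F r)) * ∏ r, W (F r)
      = ∑ F : Fin m → Z, ∑ r, (∏ r' : Fin m, if r' = r then g (F r') * W (F r') else W (F r')) := by
        refine Finset.sum_congr rfl fun F _ => ?_
        rw [Finset.sum_mul]
        refine Finset.sum_congr rfl fun r _ => ?_
        rw [← Finset.mul_prod_erase Finset.univ
            (fun r' => if r' = r then g (F r') * W (F r') else W (F r')) (Finset.mem_univ r),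
          if_pos rfl,
          Finset.prod_congr rfl (fun r' hr' => if_neg (Finset.ne_of_mem_erase hr')),
          mul_assoc, Finset.mul_prod_erase Finset.univ (fun r' => W (F r')) (Finset.mem_univ r)]
    _ = ∑ r : Fin m, ∑ F : Fin m → Z,
          (∏ r' : Fin m, if r' = r then g (F r') * W (F r') else W (F r')) := Finset.sum_comm
    _ = ∑ _r : Fin m, ∑ z, g z * W z := Finset.sum_congr rfl fun r _ => step r
    _ = m * ∑ z, g z * W z := by simp [mul_comm]

/-- **Expected Hamming distance between the LPN response and a candidate codeword.**
Let `σ ≤ n`, `η ∈ [0,1]`, and fix `s, v ∈ F₂ⁿ`.  Sample `A ∼ (Ber(σ/n))^{m×n}` (all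
entries independent) and `e ∼ (Ber(η))^m` independently (expressed by specifying the
joint point masses).  Then `E[‖(A·s + e) - A·v‖₀] = m·(η + (1 - 2η)·p)` where
`p = Pr_{a ∼ (Ber(σ/n))^n}[⟨a, s + v⟩ ≠ 0]`.  In particular, when `v = s` this
expectation equals `η·m`. -/
theorem expected_hamming_distance_sparse_lpn
    (n m σ : ℕ) (hn : 0 < n) (hm : 0 < m) (hσ : 0 < σ) (hσn : σ ≤ n)
    (η : ℝ) (hη0 : 0 ≤ η) (hη1 : η ≤ 1)
    (s v : Fin n → ZMod 2)
    (μ : Measure (Matrix (Fin m) (Fin n) (ZMod 2) × (Fin m → ZMod 2)))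
    [IsProbabilityMeasure μ]
    (hμ : ∀ (A : Matrix (Fin m) (Fin n) (ZMod 2)) (e : Fin m → ZMod 2),
      μ {(A, e)} =
        (∏ r, ∏ j, (if A r j = 1 then ENNReal.ofReal ((σ : ℝ) / n)
          else ENNReal.ofReal (1 - (σ : ℝ) / n))) *
        ∏ r, (if e r = 1 then ENNReal.ofReal η else ENNReal.ofReal (1 - η)))
    (ν : Measure (Fin n → ZMod 2)) [IsProbabilityMeasure ν]
    (hν : ∀ a : Fin n → ZMod 2,
      ν {a} = ∏ j, (if a j = 1 then ENNReal.ofReal ((σ : ℝ) / n)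
        else ENNReal.ofReal (1 - (σ : ℝ) / n)))
    (p : ℝ) (hp : p = (ν {a | (∑ j, a j * (s j + v j)) ≠ 0}).toReal) :
    (∫ x, (hammingNorm (x.1.mulVec s + x.2 - x.1.mulVec v) : ℝ) ∂μ =
      m * (η + (1 - 2 * η) * p)) ∧
    (v = s → ∫ x, (hammingNorm (x.1.mulVec s + x.2 - x.1.mulVec v) : ℝ) ∂μ = η * m) := by
  classical
  set q : ℝ := (σ : ℝ) / n with hqdef
  have hq0 : 0 ≤ q := by positivity
  have hq1 : q ≤ 1 := by
    rw [hqdef, div_le_one (by exact_mod_cast hn)]; exact_mod_cast hσn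
  set wA : (Fin n → ZMod 2) → ℝ := fun a => ∏ j, (if a j = 1 then q else 1 - q) with hwA
  set we : ZMod 2 → ℝ := fun b => if b = 1 then η else 1 - η with hwe
  have hite0 : ∀ b : ZMod 2, 0 ≤ (if b = 1 then q else 1 - q) := by
    intro b; split <;> [exact hq0; linarith]
  have hwe0 : ∀ b, 0 ≤ we b := by
    intro b; simp only [hwe]; split <;> [exact hη0; linarith]
  have hwA0 : ∀ a, 0 ≤ wA a := fun a => Finset.prod_nonneg fun j _ => hite0 _
  have hwAsum : ∑ a, wA a = 1 := by
    have key := Finset.prod_univ_sum (fun _ : Fin n => (Finset.univ : Finset (ZMod 2)))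
      (fun _ b => if b = 1 then q else 1 - q)
    rw [Fintype.piFinset_univ] at key
    have h2 : (∑ b : ZMod 2, if b = 1 then q else 1 - q) = 1 := by
      rw [zmod2_sum]; norm_num
    calc ∑ a, wA a = ∏ _j : Fin n, ∑ b : ZMod 2, (if b = 1 then q else 1 - q) := key.symm
      _ = 1 := by rw [Finset.prod_congr rfl fun j _ => h2, Finset.prod_const_one]
  have hwesum : ∑ b, we b = 1 := by rw [zmod2_sum]; simp [hwe]
  have hν' : ∀ a, ν {a} = ENNReal.ofReal (wA a) := by
    intro a
    rw [hν a, hwA, ENNReal.ofReal_prod_of_nonneg (fun j _ => hite0 _)]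
    exact Finset.prod_congr rfl fun j _ => by split <;> rfl
  have hμ' : ∀ (A : Matrix (Fin m) (Fin n) (ZMod 2)) (e : Fin m → ZMod 2),
      (μ {(A, e)}).toReal = (∏ r, wA (A r)) * ∏ r, we (e r) := by
    intro A e
    have h1 : (∏ r, ∏ j, (if A r j = 1 then ENNReal.ofReal ((σ : ℝ) / n)
        else ENNReal.ofReal (1 - (σ : ℝ) / n))) = ENNReal.ofReal (∏ r, wA (A r)) := by
      rw [ENNReal.ofReal_prod_of_nonneg (fun r _ => hwA0 (A r))]
      refine Finset.prod_congr rfl fun r _ => ?_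
      rw [hwA, ENNReal.ofReal_prod_of_nonneg (fun j _ => hite0 _)]
      exact Finset.prod_congr rfl fun j _ => by split <;> rfl
    have h2 : (∏ r, (if e r = 1 then ENNReal.ofReal η else ENNReal.ofReal (1 - η)))
        = ENNReal.ofReal (∏ r, we (e r)) := by
      rw [ENNReal.ofReal_prod_of_nonneg (fun r _ => hwe0 _)]
      exact Finset.prod_congr rfl fun r _ => by simp only [hwe]; split <;> rfl
    rw [hμ A e, h1, h2, ← ENNReal.ofReal_mul (Finset.prod_nonneg fun r _ => hwA0 (A r)),
      ENNReal.toReal_ofReal (mul_nonneg (Finset.prod_nonneg fun r _ => hwA0 (A r))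
        (Finset.prod_nonneg fun r _ => hwe0 _))]
  set D : (Fin n → ZMod 2) → ZMod 2 := fun a => ∑ j, a j * (s j + v j) with hD
  have hp' : p = ∑ a ∈ Finset.univ.filter (fun a => D a ≠ 0), wA a := by
    rw [hp]
    have hset : {a : Fin n → ZMod 2 | (∑ j, a j * (s j + v j)) ≠ 0} =
        ⋃ a ∈ Finset.univ.filter (fun a => D a ≠ 0), {a} := by
      ext a; simp [hD]
    rw [hset, measure_biUnion_finset
      (by intro x _ y _ hxy; simp [Set.disjoint_singleton, hxy])
      (fun a _ => measurableSet_singleton a)]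
    rw [Finset.sum_congr rfl fun a _ => hν' a,
      ← ENNReal.ofReal_sum_of_nonneg (fun a _ => hwA0 a),
      ENNReal.toReal_ofReal (Finset.sum_nonneg fun a _ => hwA0 a)]
  have hf : ∀ (A : Matrix (Fin m) (Fin n) (ZMod 2)) (e : Fin m → ZMod 2),
      (hammingNorm (A.mulVec s + e - A.mulVec v) : ℝ) =
        ∑ r, (if D (A r) + e r ≠ 0 then (1 : ℝ) else 0) := by
    intro A e
    have hentry : ∀ r, (A.mulVec s + e - A.mulVec v) r = D (A r) + e r := by
      intro r
      simp only [Pi.add_apply, Pi.sub_apply, Matrix.mulVec, dotProduct, hD]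
      have hsub : ∀ x y : ZMod 2, x - y = x + y := fun x y => by
        rw [sub_eq_add_neg, CharTwo.neg_eq]
      rw [hsub]
      simp only [mul_add, Finset.sum_add_distrib]
      ring
    rw [hammingNorm, Finset.card_filter]
    push_cast
    exact Finset.sum_congr rfl fun r _ => by rw [hentry r]
  set Z := (Fin n → ZMod 2) × ZMod 2 with hZ
  set W : Z → ℝ := fun z => wA z.1 * we z.2 with hW
  set g : Z → ℝ := fun z => if D z.1 + z.2 ≠ 0 then 1 else 0 with hg
  have hWsum : ∑ z : Z, W z = 1 := by
    rw [Fintype.sum_prod_type]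
    simp only [hW]
    rw [Finset.sum_congr rfl fun a _ => (Finset.mul_sum Finset.univ we (wA a)).symm]
    rw [Finset.sum_congr rfl fun (a : Fin n → ZMod 2) _ => by rw [hwesum, mul_one]]
    exact hwAsum
  have hE1 : ∑ z : Z, g z * W z = η + (1 - 2 * η) * p := by
    rw [Fintype.sum_prod_type]
    have hinner : ∀ a : Fin n → ZMod 2,
        (∑ b : ZMod 2, g (a, b) * W (a, b)) =
        η * wA a + (1 - 2 * η) * (if D a ≠ 0 then wA a else 0) := by
      intro a
      rw [zmod2_sum]
      have h2 : ∀ x : ZMod 2, x = 0 ∨ x = 1 := by decide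
      rcases h2 (D a) with h | h <;>
        simp [hg, hW, hwe, h, show (1 : ZMod 2) ≠ 0 by decide,
          show (1 + 1 : ZMod 2) = 0 by decide] <;> ring
    rw [Finset.sum_congr rfl fun a _ => hinner a, Finset.sum_add_distrib,
      ← Finset.mul_sum, ← Finset.mul_sum, ← Finset.sum_filter, hwAsum, ← hp', mul_one]
  have hint : ∫ x, (hammingNorm (x.1.mulVec s + x.2 - x.1.mulVec v) : ℝ) ∂μ =
      m * (η + (1 - 2 * η) * p) := by
    rw [MeasureTheory.integral_fintype (Integrable.of_finite)]
    simp only [Measure.real_def]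
    have hsum : ∑ x : Matrix (Fin m) (Fin n) (ZMod 2) × (Fin m → ZMod 2),
        (μ {x}).toReal • (hammingNorm (x.1.mulVec s + x.2 - x.1.mulVec v) : ℝ)
        = ∑ F : Fin m → Z, (∑ r, g (F r)) * ∏ r, W (F r) := by
      refine (Fintype.sum_equiv
        (Equiv.arrowProdEquivProdArrow (Fin m) (fun _ => Fin n → ZMod 2) (fun _ => ZMod 2)) _ _ ?_).symm
      intro F
      show (∑ r, g (F r)) * ∏ r, W (F r) =
        (μ {@Prod.mk (Matrix (Fin m) (Fin n) (ZMod 2)) (Fin m → ZMod 2)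
          (fun r => (F r).1) (fun r => (F r).2)}).toReal •
          (hammingNorm ((Matrix.mulVec (fun r => (F r).1) s) + (fun r => (F r).2)
            - Matrix.mulVec (fun r => (F r).1) v) : ℝ)
      rw [smul_eq_mul, hμ' (fun r => (F r).1) (fun r => (F r).2),
        hf (fun r => (F r).1) (fun r => (F r).2)]
      simp only [hW, hg]
      rw [Finset.prod_mul_distrib]
      ring
    rw [hsum, key_sum m W g hWsum, hE1]
  refine ⟨hint, fun hvs => ?_⟩
  have hp0 : p = 0 := by
    have hempty : {a : Fin n → ZMod 2 | (∑ j, a j * (s j + v j)) ≠ 0} = ∅ := by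
      ext a
      simp [hvs, show ∀ j, s j + s j = 0 from fun j => CharTwo.add_self_eq_zero (s j)]
    rw [hp, hempty]; simp
  rw [hint, hp0]; ring
end
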